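/- arXiv:2302.00396 — 7 statements merged into one kernel-verified Lean document; each statement's English description precedes it below -/
import Mathlib

section
/- If the associated graded algebra gr(A) is a Noetherian ring, then A is a Noetherian ring. -/
/-!
The partial order of `S` is first replaced by a linear one. In the Grothendieck group of `S`, a
submonoid `P` that is maximal among those containing every `ι t - ι s` with `s ≤ t` and every
`ι s`, but no `ι s - ι t` with `s < t`, exists by Zorn's lemma (well-foundedness of `S` makes the
submonoid generated by the required elements admissible), and by maximality it contains `g` or
`-g` for every `g`. Its image in the quotient by `P ∩ -P` is the positive cone of a linearly
ordered group `H`, and `S → H` is a strictly monotone homomorphism `φ` with `φ ≥ 0`.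

Grading `A` by `φ` gives a filtration by the linearly ordered `H` whose associated graded ring is
still `B`: if `t ≤ r + s` and `φ t = φ (r + s)` then `t = r + s`. The leading forms of a left
ideal `I` span a subspace `gr I` whose image in `B` is a left ideal, and `gr` is strictly monotone
on left ideals: if `I ≤ I'` have the same leading forms, subtracting from `a ∈ I'` an element of
`I` with the same leading form lowers the degree. This descent stops because the degrees of
nonzero homogeneous elements are well-ordered: as `h` increases, the left ideals of `B` of elements
of degree `≥ h` (ideals since `φ ≥ 0`) strictly decrease, and `B` is Noetherian.
-/

universe u

open Algebra

lemma Algebra.GrothendieckAddGroup.of_eq_of_iff {S : Type*} [AddCommMonoid S] {a b : S} :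
    of a = of b ↔ ∃ c : S, c + a = c + b :=
  (AddLocalization.addMonoidOf ⊤).eq_iff_exists.trans
    ⟨fun ⟨c, hc⟩ => ⟨c, hc⟩, fun ⟨c, hc⟩ => ⟨⟨c, trivial⟩, hc⟩⟩

lemma not_add_lt_self {S : Type*} [AddCommMonoid S] [PartialOrder S] [AddLeftStrictMono S]
    [WellFoundedLT S] (y μ : S) : ¬ y + μ < y := by
  induction y using WellFoundedLT.induction with
  | _ y ih => exact fun h => ih (y + μ) h (add_lt_add_left h μ)

namespace PositiveCone

variable {S : Type u} [AddCommMonoid S] [PartialOrder S]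

local notation "ι" => GrothendieckAddGroup.of (M := S)

def Admissible (P : AddSubmonoid (GrothendieckAddGroup S)) : Prop :=
  ∀ ⦃s t : S⦄, s < t → ι s - ι t ∉ P

lemma exists_sub_eq_add_nsmul_of_notMem {P : AddSubmonoid (GrothendieckAddGroup S)}
    (hP : Maximal Admissible P) {g : GrothendieckAddGroup S} (hg : g ∉ P) :
    ∃ s t : S, s < t ∧ ∃ n ≠ 0, ∃ p ∈ P, ι s - ι t = p + n • g := by
  have hnot : ¬ Admissible (P ⊔ AddSubmonoid.closure {g}) := fun hA =>
    hg (hP.2 hA le_sup_left (le_sup_right (a := P) (AddSubmonoid.subset_closure rfl)))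
  simp only [Admissible, not_forall, not_not, AddSubmonoid.mem_sup,
    AddSubmonoid.mem_closure_singleton] at hnot
  obtain ⟨s, t, hst, p, hp, _, ⟨n, rfl⟩, hsum⟩ := hnot
  refine ⟨s, t, hst, n, ?_, p, hp, hsum.symm⟩
  rintro rfl
  rw [zero_smul, add_zero] at hsum
  exact hP.1 hst (hsum ▸ hp)

def baseCone : AddSubmonoid (GrothendieckAddGroup S) :=
  AddSubmonoid.closure (Set.range ι ∪ {g | ∃ s t, s ≤ t ∧ ι t - ι s = g})

variable [IsOrderedAddMonoid S]

lemma exists_of_mem_baseCone {g : GrothendieckAddGroup S} (hg : g ∈ baseCone) :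
    ∃ a b μ : S, a ≤ b ∧ ι (b + μ) - ι a = g := by
  induction hg using AddSubmonoid.closure_induction with
  | mem g hg =>
    rcases hg with ⟨μ, rfl⟩ | ⟨s, t, hst, rfl⟩
    · exact ⟨0, 0, μ, le_rfl, by simp⟩
    · exact ⟨s, t, 0, hst, by simp⟩
  | zero => exact ⟨0, 0, 0, le_rfl, by simp⟩
  | add g g' _ _ ih ih' =>
    obtain ⟨a, b, μ, hab, rfl⟩ := ih
    obtain ⟨a', b', μ', hab', rfl⟩ := ih'
    refine ⟨a + a', b + b', μ + μ', add_le_add hab hab', ?_⟩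
    simp only [map_add]
    abel

variable [AddLeftStrictMono S]

lemma isSpanning_of_maximal {P : AddSubmonoid (GrothendieckAddGroup S)}
    (hP : Maximal Admissible P) : P.IsSpanning := by
  intro g
  by_contra! h
  obtain ⟨s, t, hst, n, hn, p, hp, he⟩ := exists_sub_eq_add_nsmul_of_notMem hP h.1
  obtain ⟨s', t', hst', n', hn', p', hp', he'⟩ := exists_sub_eq_add_nsmul_of_notMem hP h.2
  -- weighting the two witnesses by `n'` and `n` cancels `g`
  apply hP.1 (add_lt_add_of_lt_of_le (nsmul_lt_nsmul_right hn' hst)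
    (nsmul_le_nsmul_right hst'.le n))
  convert add_mem (nsmul_mem hp n') (nsmul_mem hp' n) using 1
  calc ι (n' • s + n • s') - ι (n' • t + n • t') = n' • (ι s - ι t) + n • (ι s' - ι t') := by
        simp only [map_add, map_nsmul, nsmul_sub]; abel
    _ = n' • p + n • p' := by
        rw [he, he']
        simp only [smul_add, smul_neg, smul_smul]
        rw [mul_comm n n']
        abel

variable [WellFoundedLT S]

lemma admissible_baseCone : Admissible (S := S) baseCone := by
  intro s t hst hmem
  obtain ⟨a, b, μ, hab, hg⟩ := exists_of_mem_baseCone hmem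
  obtain ⟨c, hc⟩ : ∃ c : S, c + (b + μ + t) = c + (s + a) := by
    rw [← GrothendieckAddGroup.of_eq_of_iff, map_add, map_add ι s]
    rw [sub_eq_sub_iff_add_eq_add] at hg
    rw [← hg]
  refine not_add_lt_self (c + t + b) μ ?_
  calc c + t + b + μ = c + (s + a) := by rw [← hc]; abel
    _ ≤ c + (s + b) := by gcongr
    _ < c + (t + b) := by gcongr
    _ = c + t + b := by abel

lemma exists_maximal_admissible :
    ∃ P, baseCone ≤ P ∧ Maximal (Admissible (S := S)) P := by
  refine zorn_le_nonempty₀ _ (fun c hcA hchain P hP => ?_) _ admissible_baseCone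
  refine ⟨sSup c, fun s t hst hmem => ?_, fun Q hQ => le_sSup hQ⟩
  obtain ⟨Q, hQ, hmemQ⟩ := (AddSubmonoid.mem_sSup_of_directedOn ⟨P, hP⟩ hchain.directedOn).1 hmem
  exact hcA hQ hst hmemQ

end PositiveCone

theorem AddSubmonoid.IsSpanning.exists_addMonoidHom_nonneg_iff {G : Type u} [AddCommGroup G]
    {P : AddSubmonoid G} (hP : P.IsSpanning) :
    ∃ (Q : Type u) (_ : AddCommGroup Q) (_ : LinearOrder Q) (_ : IsOrderedAddMonoid Q)
      (f : G →+ Q), ∀ g, 0 ≤ f g ↔ g ∈ P := by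
  classical
  let f := QuotientAddGroup.mk' P.support
  have mem_map_iff (g : G) : f g ∈ P.map f ↔ g ∈ P := by
    refine ⟨fun ⟨p, hp, hpg⟩ => ?_, fun hg => ⟨g, hg, rfl⟩⟩
    have hsupp : -p + g ∈ P.support := (QuotientAddGroup.eq).1 hpg
    simpa using add_mem hp hsupp.1
  let C : AddGroupCone (G ⧸ P.support) :=
    { P.map f with
      eq_zero_of_mem_of_neg_mem' := by
        rintro x ⟨g, hg, rfl⟩ hneg
        rw [← map_neg] at hneg
        replace hneg := (mem_map_iff _).1 hneg
        exact (QuotientAddGroup.eq_zero_iff g).2 ⟨hg, hneg⟩ }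
  have hC (g : G) : f g ∈ C ↔ g ∈ P := mem_map_iff g
  have : HasMemOrNegMem C := ⟨fun x => by
    obtain ⟨g, rfl⟩ := QuotientAddGroup.mk'_surjective P.support x
    rw [← map_neg, hC, hC]
    exact hP.mem_or_neg_mem g⟩
  let _ := LinearOrder.mkOfAddGroupCone C
  exact ⟨_, inferInstance, inferInstance, IsOrderedAddMonoid.mkOfCone C, f, fun g => by
    simp [hC]⟩

theorem exists_strictMono_addMonoidHom_nonneg {S : Type u} [AddCommMonoid S] [PartialOrder S]
    [IsOrderedAddMonoid S] [AddLeftStrictMono S] [WellFoundedLT S] :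
    ∃ (H : Type u) (_ : AddCommGroup H) (_ : LinearOrder H) (_ : IsOrderedAddMonoid H)
      (φ : S →+ H), StrictMono φ ∧ ∀ s, 0 ≤ φ s := by
  obtain ⟨P, hbase, hmax⟩ := PositiveCone.exists_maximal_admissible (S := S)
  obtain ⟨H, _, _, _, f, hf⟩ :=
    (PositiveCone.isSpanning_of_maximal hmax).exists_addMonoidHom_nonneg_iff
  let ι := GrothendieckAddGroup.of (M := S)
  have hle {s t : S} : f (ι s) ≤ f (ι t) ↔ ι t - ι s ∈ P := by
    rw [← sub_nonneg, ← map_sub, hf]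
  refine ⟨H, inferInstance, inferInstance, inferInstance, f.comp ι, fun s t hst => ?_, fun s => ?_⟩
  · refine lt_of_le_not_ge (hle.2 (hbase ?_)) fun hts => hmax.1 hst (hle.1 hts)
    exact AddSubmonoid.subset_closure (Or.inr ⟨s, t, hst.le, rfl⟩)
  · exact (hf _).2 (hbase (AddSubmonoid.subset_closure (Or.inl ⟨s, rfl⟩)))

structure IsProjectionFamily {k S A : Type*} [Semiring k] [AddCommGroup A] [Module k A]
    (X : S → Submodule k A) (π : S → A →ₗ[k] A) : Prop where
  iSup_eq_top : iSup X = ⊤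
  mem : ∀ t a, π t a ∈ X t
  apply_of_mem : ∀ t, ∀ x ∈ X t, π t x = x
  apply_of_mem_ne : ∀ s t, s ≠ t → ∀ x ∈ X s, π t x = 0

namespace IsProjectionFamily

section Module

variable {k S A : Type*} [Semiring k] [AddCommGroup A] [Module k A]

def degreeLE {H : Type*} [LT H] (π : S → A →ₗ[k] A) (φ : S → H) (h : H) : Submodule k A :=
  ⨅ (t) (_ : h < φ t), LinearMap.ker (π t)

def degreeGE {H : Type*} [LT H] (π : S → A →ₗ[k] A) (φ : S → H) (h : H) : Submodule k A :=
  ⨅ (t) (_ : φ t < h), LinearMap.ker (π t)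

variable {π : S → A →ₗ[k] A} {H : Type*} [LinearOrder H] {φ : S → H}

lemma mem_degreeLE {h : H} {a : A} : a ∈ degreeLE π φ h ↔ ∀ t, h < φ t → π t a = 0 := by
  simp [degreeLE]

lemma mem_degreeGE {h : H} {a : A} : a ∈ degreeGE π φ h ↔ ∀ t, φ t < h → π t a = 0 := by
  simp [degreeGE]

lemma degreeLE_mono {h h' : H} (hh : h ≤ h') : degreeLE π φ h ≤ degreeLE π φ h' :=
  fun _ ha => mem_degreeLE.2 fun t ht => mem_degreeLE.1 ha t (hh.trans_lt ht)

lemma degreeGE_anti {h h' : H} (hh : h ≤ h') : degreeGE π φ h' ≤ degreeGE π φ h :=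
  fun _ ha => mem_degreeGE.2 fun t ht => mem_degreeGE.1 ha t (ht.trans_le hh)

lemma le_of_mem_degreeLE {h : H} {a : A} (ha : a ∈ degreeLE π φ h) {s : S} (hs : π s a ≠ 0) :
    φ s ≤ h :=
  le_of_not_gt fun hlt => hs (mem_degreeLE.1 ha s hlt)

lemma le_of_mem_degreeGE {h : H} {a : A} (ha : a ∈ degreeGE π φ h) {s : S} (hs : π s a ≠ 0) :
    h ≤ φ s :=
  le_of_not_gt fun hlt => hs (mem_degreeGE.1 ha s hlt)

variable {X : S → Submodule k A} (hπ : IsProjectionFamily X π)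
include hπ

lemma apply_apply_self (t : S) (a : A) : π t (π t a) = π t a :=
  hπ.apply_of_mem t _ (hπ.mem t a)

lemma apply_apply_of_ne {s t : S} (h : s ≠ t) (a : A) : π t (π s a) = 0 :=
  hπ.apply_of_mem_ne s t h _ (hπ.mem s a)

lemma apply_eq_zero_of_sum_eq {T : Finset S} {a : A} (hT : ∑ u ∈ T, π u a = a) {t : S}
    (ht : t ∉ T) : π t a = 0 := by
  rw [← hT, map_sum]
  exact Finset.sum_eq_zero fun u hu => hπ.apply_apply_of_ne (ne_of_mem_of_not_mem hu ht) a

lemma sum_eq_of_subset {T T' : Finset S} {a : A} (hT : ∑ u ∈ T, π u a = a) (h : T ⊆ T') :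
    ∑ u ∈ T', π u a = a := by
  rw [← Finset.sum_subset h fun t _ ht => hπ.apply_eq_zero_of_sum_eq hT ht, hT]

lemma exists_finset_sum_eq (a : A) : ∃ T : Finset S, ∑ t ∈ T, π t a = a := by
  classical
  have ha : a ∈ iSup X := hπ.iSup_eq_top ▸ Submodule.mem_top
  refine Submodule.iSup_induction X (motive := fun a => ∃ T : Finset S, ∑ t ∈ T, π t a = a) ha
    (fun s x hx => ⟨{s}, by rw [Finset.sum_singleton, hπ.apply_of_mem s x hx]⟩)
    ⟨∅, Finset.sum_empty⟩ fun x y ⟨T, hT⟩ ⟨T', hT'⟩ => ⟨T ∪ T', ?_⟩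
  simp only [map_add, Finset.sum_add_distrib]
  rw [hπ.sum_eq_of_subset hT Finset.subset_union_left,
    hπ.sum_eq_of_subset hT' Finset.subset_union_right]

lemma finite_support (a : A) : {t | π t a ≠ 0}.Finite := by
  obtain ⟨T, hT⟩ := hπ.exists_finset_sum_eq a
  exact T.finite_toSet.subset fun t ht => by_contra fun h => ht (hπ.apply_eq_zero_of_sum_eq hT h)

noncomputable def support (a : A) : Finset S := (hπ.finite_support a).toFinset

lemma mem_support {a : A} {t : S} : t ∈ hπ.support a ↔ π t a ≠ 0 :=
  Set.Finite.mem_toFinset _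

lemma sum_support (a : A) : ∑ t ∈ hπ.support a, π t a = a := by
  obtain ⟨T, hT⟩ := hπ.exists_finset_sum_eq a
  refine (Finset.sum_subset (fun t ht => ?_) fun t _ ht => ?_).trans hT
  · exact by_contra fun h => hπ.mem_support.1 ht (hπ.apply_eq_zero_of_sum_eq hT h)
  · exact not_not.1 (mt hπ.mem_support.2 ht)

lemma ext {a b : A} (h : ∀ t, π t a = π t b) : a = b := by
  rw [← sub_eq_zero, ← hπ.sum_support (a - b)]
  exact Finset.sum_eq_zero fun t _ => by rw [map_sub, h, sub_self]

lemma mem_degreeGE_of_mem {h : H} {s : S} (hs : h ≤ φ s) {x : A} (hx : x ∈ X s) :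
    x ∈ degreeGE π φ h :=
  mem_degreeGE.2 fun t ht => hπ.apply_of_mem_ne s t (by rintro rfl; exact ht.not_ge hs) x hx

lemma ne_bot_of_apply_ne_zero {s : S} {a : A} (ha : π s a ≠ 0) : X s ≠ ⊥ :=
  (Submodule.ne_bot_iff _).2 ⟨π s a, hπ.mem s a, ha⟩

lemma exists_mem_degreeLE_of_ne_zero {a : A} (ha : a ≠ 0) :
    ∃ s, π s a ≠ 0 ∧ a ∈ degreeLE π φ (φ s) := by
  have hne : (hπ.support a).Nonempty := by
    rw [Finset.nonempty_iff_ne_empty]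
    exact fun h0 => ha (by rw [← hπ.sum_support a, h0, Finset.sum_empty])
  obtain ⟨s, hs, hmax⟩ := Finset.exists_max_image (hπ.support a) φ hne
  refine ⟨s, hπ.mem_support.1 hs, mem_degreeLE.2 fun t ht => ?_⟩
  exact by_contra fun hta => ht.not_ge (hmax t (hπ.mem_support.2 hta))

section Order

variable [PartialOrder S]

lemma apply_eq_zero_of_mem_iSup_le {u t : S} (ht : ¬ t ≤ u) {y : A}
    (hy : y ∈ ⨆ (t : S) (_ : t ≤ u), X t) : π t y = 0 := by
  have hker : (⨆ (t' : S) (_ : t' ≤ u), X t') ≤ LinearMap.ker (π t) :=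
    iSup₂_le fun t' ht' x hx => hπ.apply_of_mem_ne t' t (by rintro rfl; exact ht ht') x hx
  exact hker hy

lemma mem_degreeLE_of_mem_iSup_le (hφ : Monotone φ) {u : S} {y : A}
    (hy : y ∈ ⨆ (t : S) (_ : t ≤ u), X t) : y ∈ degreeLE π φ (φ u) :=
  mem_degreeLE.2 fun _ ht => hπ.apply_eq_zero_of_mem_iSup_le (fun htu => (hφ htu).not_gt ht) hy

end Order

variable [DecidableEq S]

lemma apply_sum_apply (F : Finset S) (a : A) (s : S) :
    π s (∑ t ∈ F, π t a) = if s ∈ F then π s a else 0 := by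
  rw [map_sum]
  split_ifs with hs
  · rw [Finset.sum_eq_single_of_mem s hs fun t _ hts => hπ.apply_apply_of_ne hts a,
      hπ.apply_apply_self]
  · exact Finset.sum_eq_zero fun t ht => hπ.apply_apply_of_ne (ne_of_mem_of_not_mem ht hs) a

lemma apply_sum_filter_support (p : S → Prop) [DecidablePred p] (a : A) (s : S) :
    π s (∑ t ∈ (hπ.support a).filter p, π t a) = if p s then π s a else 0 := by
  rw [hπ.apply_sum_apply]
  by_cases hp : p s <;> by_cases ha : π s a = 0 <;> simp [hp, ha, hπ.mem_support]

variable (φ) in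
noncomputable def proj (h : H) : A →ₗ[k] A where
  toFun a := ∑ t ∈ (hπ.support a).filter (φ · = h), π t a
  map_add' a b := hπ.ext fun s => by
    rw [map_add (π s), hπ.apply_sum_filter_support, hπ.apply_sum_filter_support,
      hπ.apply_sum_filter_support]
    split_ifs <;> simp
  map_smul' c a := hπ.ext fun s => by
    rw [map_smul (π s), hπ.apply_sum_filter_support, hπ.apply_sum_filter_support]
    split_ifs <;> simp

lemma proj_apply (h : H) (a : A) :
    hπ.proj φ h a = ∑ t ∈ (hπ.support a).filter (φ · = h), π t a := rfl

lemma apply_proj (h : H) (a : A) (s : S) :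
    π s (hπ.proj φ h a) = if φ s = h then π s a else 0 :=
  hπ.apply_sum_filter_support _ a s

lemma proj_proj (h h' : H) (a : A) :
    hπ.proj φ h (hπ.proj φ h' a) = if h' = h then hπ.proj φ h a else 0 := hπ.ext fun s => by
  rw [apply_ite (π s), map_zero, hπ.apply_proj, hπ.apply_proj, hπ.apply_proj]
  by_cases hs : φ s = h <;> by_cases hs' : φ s = h' <;> simp [hs, hs'] <;> grind

lemma proj_eq_zero_of_mem_degreeLE {h h' : H} (hlt : h' < h) {a : A} (ha : a ∈ degreeLE π φ h') :
    hπ.proj φ h a = 0 := hπ.ext fun s => by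
  rw [hπ.apply_proj, map_zero]
  split_ifs with hs
  · exact mem_degreeLE.1 ha s (hs ▸ hlt)
  · rfl

lemma exists_lt_of_proj_eq_zero {h : H} {a : A} (ha : a ∈ degreeLE π φ h)
    (hproj : hπ.proj φ h a = 0) (ha0 : a ≠ 0) :
    ∃ t, π t a ≠ 0 ∧ φ t < h ∧ a ∈ degreeLE π φ (φ t) := by
  obtain ⟨t, ht, htF⟩ := hπ.exists_mem_degreeLE_of_ne_zero (φ := φ) ha0
  refine ⟨t, ht, lt_of_le_of_ne (le_of_mem_degreeLE ha ht) fun hth => ht ?_, htF⟩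
  have := hπ.apply_proj (φ := φ) h a t
  rwa [hproj, map_zero, if_pos hth, eq_comm] at this

lemma proj_of_mem_iSup_le [PartialOrder S] (hφ : StrictMono φ) {u : S} {y : A}
    (hy : y ∈ ⨆ (t : S) (_ : t ≤ u), X t) : hπ.proj φ (φ u) y = π u y := hπ.ext fun s => by
  rw [hπ.apply_proj]
  by_cases hsu : s = u
  · subst hsu; rw [if_pos rfl, hπ.apply_apply_self]
  rw [hπ.apply_apply_of_ne (Ne.symm hsu)]
  split_ifs with hφs
  · exact hπ.apply_eq_zero_of_mem_iSup_le (fun hle => (hφ (lt_of_le_of_ne hle hsu)).ne hφs) hy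
  · rfl

end Module

end IsProjectionFamily

namespace IsProjectionFamily

variable {k S A B : Type*} [CommRing k] [Ring A] [Algebra k A] [Ring B] [Module k B]
  {X : S → Submodule k A} {π : S → A →ₗ[k] A} (hπ : IsProjectionFamily X π) (e : A ≃ₗ[k] B)

section LeftIdeal

include hπ

def leftIdeal (V : Submodule k A) (hV : ∀ r, ∀ x ∈ X r, ∀ v ∈ V, e.symm (e x * e v) ∈ V) :
    Submodule B B where
  carrier := {y | e.symm y ∈ V}
  zero_mem' := by simp
  add_mem' {y z} hy hz := by simpa using add_mem hy hz
  smul_mem' β y hy := by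
    have hβ : β = ∑ r ∈ hπ.support (e.symm β), e (π r (e.symm β)) := by
      rw [← map_sum, hπ.sum_support, LinearEquiv.apply_symm_apply]
    change e.symm (β * y) ∈ V
    rw [hβ, ← e.apply_symm_apply y, Finset.sum_mul, map_sum]
    exact Submodule.sum_mem _ fun r _ => hV r _ (hπ.mem r _) _ hy

variable {e}

lemma mem_leftIdeal {V : Submodule k A} {hV} {y : B} :
    y ∈ hπ.leftIdeal e V hV ↔ e.symm y ∈ V := Iff.rfl

lemma leftIdeal_le_leftIdeal_iff {V W : Submodule k A} {hV hW} :
    hπ.leftIdeal e V hV ≤ hπ.leftIdeal e W hW ↔ V ≤ W :=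
  ⟨fun h v hv => by simpa [mem_leftIdeal] using h (x := e v) (by simpa [mem_leftIdeal] using hv),
    fun h _ hy => h hy⟩

end LeftIdeal

include hπ

section Gr

variable [DecidableEq S] {H : Type*} [LinearOrder H] {φ : S → H}

variable (φ) in
/-- `e` maps this onto the associated graded left ideal `gr I` of `B`, spanned by the leading
forms of the elements of `I` with respect to the filtration by `φ`-degree. -/
noncomputable def grSubmodule (I : Submodule A A) : Submodule k A :=
  ⨆ h, (I.restrictScalars k ⊓ degreeLE π φ h).map (hπ.proj φ h)

lemma grSubmodule_mono {I I' : Submodule A A} (hI : I ≤ I') :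
    hπ.grSubmodule φ I ≤ hπ.grSubmodule φ I' :=
  iSup_mono fun _ => Submodule.map_mono (inf_le_inf_right _ (Submodule.restrictScalars_mono k hI))

lemma exists_proj_eq_of_mem_grSubmodule {I : Submodule A A} {v : A}
    (hv : v ∈ hπ.grSubmodule φ I) (h : H) :
    ∃ c ∈ I, c ∈ degreeLE π φ h ∧ hπ.proj φ h c = hπ.proj φ h v := by
  refine Submodule.iSup_induction _
    (motive := fun v => ∃ c ∈ I, c ∈ degreeLE π φ h ∧ hπ.proj φ h c = hπ.proj φ h v)
    hv (fun h' w hw => ?_) ⟨0, zero_mem _, zero_mem _, rfl⟩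
    fun v w ⟨c, hcI, hc, hcv⟩ ⟨d, hdI, hd, hdw⟩ =>
      ⟨c + d, add_mem hcI hdI, add_mem hc hd, by rw [map_add, map_add, hcv, hdw]⟩
  obtain ⟨a, ⟨haI, ha⟩, rfl⟩ := hw
  rw [hπ.proj_proj]
  split_ifs with hh
  · subst hh
    exact ⟨a, haI, ha, rfl⟩
  · exact ⟨0, zero_mem _, zero_mem _, map_zero _⟩

theorem le_of_grSubmodule_le (hwf : {s | X s ≠ ⊥}.WellFoundedOn (fun s t => φ s < φ t))
    {I I' : Submodule A A} (hII : I ≤ I') (hgr : hπ.grSubmodule φ I' ≤ hπ.grSubmodule φ I) :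
    I' ≤ I := by
  have key : ∀ s ∈ {s | X s ≠ ⊥}, ∀ a ∈ I', a ∈ degreeLE π φ (φ s) → a ∈ I := by
    intro s hs
    refine hwf.induction hs (P := fun s => ∀ a ∈ I', a ∈ degreeLE π φ (φ s) → a ∈ I)
      fun s _ ih a ha haF => ?_
    obtain ⟨c, hcI, hcF, hc⟩ := hπ.exists_proj_eq_of_mem_grSubmodule
      (hgr (Submodule.mem_iSup_of_mem (φ s) ⟨a, ⟨ha, haF⟩, rfl⟩)) (φ s)
    have hd0 : hπ.proj φ (φ s) (a - c) = 0 := by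
      rw [map_sub, hc, hπ.proj_proj, if_pos rfl, sub_self]
    suffices a - c ∈ I by simpa using add_mem this hcI
    by_cases hzero : a - c = 0
    · simp [hzero]
    obtain ⟨t, ht, hlt, htF⟩ := hπ.exists_lt_of_proj_eq_zero (sub_mem haF hcF) hd0 hzero
    exact ih t (hπ.ne_bot_of_apply_ne_zero ht) hlt _ (sub_mem ha (hII hcI)) htF
  intro a ha
  by_cases ha0 : a = 0
  · simp [ha0]
  obtain ⟨s, hs, hsF⟩ := hπ.exists_mem_degreeLE_of_ne_zero (φ := φ) ha0
  exact key s (hπ.ne_bot_of_apply_ne_zero hs) a ha hsF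

end Gr

variable [AddCommMonoid S]

lemma e_mul_eq_sum
    (he_mul : ∀ r s : S, ∀ x ∈ X r, ∀ y ∈ X s, e x * e y = e (π (r + s) (x * y)))
    {r : S} {x : A} (hx : x ∈ X r) (v : A) :
    e x * e v = ∑ s ∈ hπ.support v, e (π (r + s) (x * π s v)) := by
  conv_lhs => rw [← hπ.sum_support v]
  rw [map_sum, Finset.mul_sum]
  exact Finset.sum_congr rfl fun s _ => he_mul r s x hx _ (hπ.mem s v)

variable {H : Type*} [AddCommMonoid H] [LinearOrder H] [IsOrderedCancelAddMonoid H] {φ : S →+ H}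

lemma symm_e_mul_mem_degreeGE (hφ0 : ∀ s, 0 ≤ φ s)
    (he_mul : ∀ r s : S, ∀ x ∈ X r, ∀ y ∈ X s, e x * e y = e (π (r + s) (x * y))) (h : H) :
    ∀ r, ∀ x ∈ X r, ∀ v ∈ degreeGE π φ h, e.symm (e x * e v) ∈ degreeGE π φ h := by
  intro r x hx v hv
  rw [hπ.e_mul_eq_sum e he_mul hx, ← map_sum, e.symm_apply_apply]
  refine Submodule.sum_mem _ fun s hs => hπ.mem_degreeGE_of_mem ?_ (hπ.mem _ _)
  rw [map_add]
  exact (le_of_mem_degreeGE hv (hπ.mem_support.1 hs)).trans (le_add_of_nonneg_left (hφ0 r))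

theorem wellFoundedOn_ne_bot [IsNoetherianRing B] (hφ0 : ∀ s, 0 ≤ φ s)
    (he_mul : ∀ r s : S, ∀ x ∈ X r, ∀ y ∈ X s, e x * e y = e (π (r + s) (x * y))) :
    {s | X s ≠ ⊥}.WellFoundedOn (fun s t => φ s < φ t) := by
  let U (h : H) := hπ.leftIdeal e (degreeGE π φ h) (hπ.symm_e_mul_mem_degreeGE e hφ0 he_mul h)
  have hU {s t : S} (hs : X s ≠ ⊥) (hst : φ s < φ t) : U (φ t) < U (φ s) := by
    refine lt_of_le_not_ge (hπ.leftIdeal_le_leftIdeal_iff.2 (degreeGE_anti hst.le)) fun hle => ?_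
    obtain ⟨x, hx, hx0⟩ := Submodule.exists_mem_ne_zero_of_ne_bot hs
    have hxt := hπ.leftIdeal_le_leftIdeal_iff.1 hle (hπ.mem_degreeGE_of_mem le_rfl hx)
    exact hx0 (hπ.apply_of_mem s x hx ▸ mem_degreeGE.1 hxt s hst)
  exact (InvImage.wf (fun s : {s | X s ≠ ⊥} => U (φ s)) wellFounded_gt).mono
    fun s t hst => hU s.2 hst

variable [PartialOrder S]

lemma mul_mem_degreeLE
    (hmul : ∀ r s : S, ∀ a ∈ X r, ∀ b ∈ X s, a * b ∈ ⨆ (t : S) (_ : t ≤ r + s), X t)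
    (hφ : Monotone φ) {r : S} {x : A} (hx : x ∈ X r) {h : H} {a : A}
    (ha : a ∈ degreeLE π φ h) : x * a ∈ degreeLE π φ (φ r + h) := by
  rw [← hπ.sum_support a, Finset.mul_sum]
  refine Submodule.sum_mem _ fun s hs => degreeLE_mono ?_
    (hπ.mem_degreeLE_of_mem_iSup_le hφ (hmul r s x hx _ (hπ.mem s a)))
  rw [map_add]
  exact add_le_add_right (le_of_mem_degreeLE ha (hπ.mem_support.1 hs)) _

variable [DecidableEq S]

lemma e_mul_proj
    (hmul : ∀ r s : S, ∀ a ∈ X r, ∀ b ∈ X s, a * b ∈ ⨆ (t : S) (_ : t ≤ r + s), X t)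
    (hφ : StrictMono φ)
    (he_mul : ∀ r s : S, ∀ x ∈ X r, ∀ y ∈ X s, e x * e y = e (π (r + s) (x * y)))
    {r : S} {x : A} (hx : x ∈ X r) {h : H} {a : A} (ha : a ∈ degreeLE π φ h) :
    e x * e (hπ.proj φ h a) = e (hπ.proj φ (φ r + h) (x * a)) := by
  have hterm : ∀ s ∈ hπ.support a, hπ.proj φ (φ r + h) (x * π s a) =
      if φ s = h then π (r + s) (x * π s a) else 0 := by
    intro s hs
    have hprod := hmul r s x hx _ (hπ.mem s a)
    split_ifs with hsh
    · rw [← hsh, ← map_add, hπ.proj_of_mem_iSup_le hφ hprod]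
    · refine hπ.proj_eq_zero_of_mem_degreeLE ?_ (hπ.mem_degreeLE_of_mem_iSup_le hφ.monotone hprod)
      rw [map_add]
      exact add_lt_add_right (lt_of_le_of_ne (le_of_mem_degreeLE ha (hπ.mem_support.1 hs)) hsh) _
  conv_rhs => rw [← hπ.sum_support a, Finset.mul_sum, map_sum, Finset.sum_congr rfl hterm,
    ← Finset.sum_filter, map_sum]
  rw [proj_apply, map_sum, Finset.mul_sum]
  exact Finset.sum_congr rfl fun s _ => he_mul r s x hx _ (hπ.mem s a)

lemma symm_e_mul_mem_grSubmodule
    (hmul : ∀ r s : S, ∀ a ∈ X r, ∀ b ∈ X s, a * b ∈ ⨆ (t : S) (_ : t ≤ r + s), X t)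
    (hφ : StrictMono φ)
    (he_mul : ∀ r s : S, ∀ x ∈ X r, ∀ y ∈ X s, e x * e y = e (π (r + s) (x * y)))
    (I : Submodule A A) :
    ∀ r, ∀ x ∈ X r, ∀ v ∈ hπ.grSubmodule φ I, e.symm (e x * e v) ∈ hπ.grSubmodule φ I := by
  intro r x hx v hv
  refine Submodule.iSup_induction _ (motive := fun v => e.symm (e x * e v) ∈ hπ.grSubmodule φ I)
    hv (fun h w hw => ?_) (by simp) fun v w hv hw => ?_
  · obtain ⟨a, ⟨haI, ha⟩, rfl⟩ := hw
    rw [hπ.e_mul_proj e hmul hφ he_mul hx ha, e.symm_apply_apply]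
    exact Submodule.mem_iSup_of_mem (φ r + h)
      ⟨x * a, ⟨I.smul_mem x haI, hπ.mul_mem_degreeLE hmul hφ.monotone hx ha⟩, rfl⟩
  · rw [map_add, mul_add, map_add]
    exact add_mem hv hw

theorem isNoetherianRing_of_gr
    (hmul : ∀ r s : S, ∀ a ∈ X r, ∀ b ∈ X s, a * b ∈ ⨆ (t : S) (_ : t ≤ r + s), X t)
    (hφ : StrictMono φ) (hφ0 : ∀ s, 0 ≤ φ s)
    (he_mul : ∀ r s : S, ∀ x ∈ X r, ∀ y ∈ X s, e x * e y = e (π (r + s) (x * y)))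
    [IsNoetherianRing B] : IsNoetherianRing A := by
  have hwf := hπ.wellFoundedOn_ne_bot e hφ0 he_mul
  let J (I : Submodule A A) : Submodule B B :=
    hπ.leftIdeal e (hπ.grSubmodule φ I) (hπ.symm_e_mul_mem_grSubmodule e hmul hφ he_mul I)
  have hJ : StrictMono J := fun I I' hlt =>
    lt_of_le_not_ge (hπ.leftIdeal_le_leftIdeal_iff.2 (hπ.grSubmodule_mono hlt.le)) fun hge =>
      hlt.not_ge (hπ.le_of_grSubmodule_le hwf hlt.le (hπ.leftIdeal_le_leftIdeal_iff.1 hge))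
  rw [isNoetherianRing_iff, isNoetherian_iff']
  exact hJ.wellFoundedGT

end IsProjectionFamily

theorem gr_noetherian_implies_noetherian_general
    {k : Type*} [Field k]
    {S : Type*} [AddCommMonoid S] [PartialOrder S] [DecidableEq S]
    (hmono : ∀ r r' s s' : S, r ≤ r' → s ≤ s' → r + s ≤ r' + s')
    (hstrict : ∀ r s t : S, r < s → r + t < s + t)
    (hwf : WellFounded ((· < ·) : S → S → Prop))
    {A : Type*} [Ring A] [Algebra k A]
    (X : S → Submodule k A)
    (hinternal : DirectSum.IsInternal X)
    (hmulX : ∀ r s : S, ∀ a ∈ X r, ∀ b ∈ X s,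
      a * b ∈ ⨆ (t : S) (_ : t ≤ r + s), X t)
    (π : S → (A →ₗ[k] A))
    (hπ_mem : ∀ (t : S) (a : A), π t a ∈ X t)
    (hπ_id : ∀ t : S, ∀ x ∈ X t, π t x = x)
    (hπ_ne : ∀ s t : S, s ≠ t → ∀ x ∈ X s, π t x = 0)
    {B : Type*} [Ring B] [Algebra k B]
    (e : A ≃ₗ[k] B)
    (he_mul : ∀ r s : S, ∀ x ∈ X r, ∀ y ∈ X s,
      e x * e y = e (π (r + s) (x * y)))
    (hB : IsNoetherianRing B) :
    IsNoetherianRing A := by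
  have : IsOrderedAddMonoid S := { add_le_add_left := fun r r' h s => hmono r r' s s h le_rfl }
  have : AddLeftStrictMono S := ⟨fun t r s h => by simpa only [add_comm t] using hstrict r s t h⟩
  have : WellFoundedLT S := ⟨hwf⟩
  obtain ⟨H, _, _, _, φ, hφ, hφ0⟩ := exists_strictMono_addMonoidHom_nonneg (S := S)
  have hπ : IsProjectionFamily X π :=
    ⟨hinternal.submodule_iSup_eq_top, hπ_mem, hπ_id, hπ_ne⟩
  exact hπ.isNoetherianRing_of_gr e hmulX hφ hφ0 he_mul

/-- Let `k` be a field, `(S,+,0)` an ordered commutative monoid whose order is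
compatible with addition (both for `≤` and `<`), directed, and well-founded.  Let `A` be a
`k`-algebra with an internal direct sum decomposition `A = ⊕_{s ∈ S} X s` such that `1 ∈ X 0` and
`X r · X s ⊆ ⊕_{t ≤ r+s} X t`, with projections `π t` onto the components.  Let `B` be the
associated graded algebra: a `k`-algebra together with a `k`-linear equivalence `e : A ≃ B`
satisfying `e 1 = 1` and `e x * e y = e (π (r+s) (x*y))` for `x ∈ X r`, `y ∈ X s`.
If `B` is Noetherian, then `A` is Noetherian. -/
theorem gr_noetherian_implies_noetherian
    {k : Type*} [Field k]
    {S : Type*} [AddCommMonoid S] [PartialOrder S] [DecidableEq S]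
    (hmono : ∀ r r' s s' : S, r ≤ r' → s ≤ s' → r + s ≤ r' + s')
    (hstrict : ∀ r s t : S, r < s → r + t < s + t)
    (hdir : ∀ r s : S, ∃ m : S, r ≤ m ∧ s ≤ m)
    (hwf : WellFounded ((· < ·) : S → S → Prop))
    {A : Type*} [Ring A] [Algebra k A]
    (X : S → Submodule k A)
    (hinternal : DirectSum.IsInternal X)
    (hone : (1 : A) ∈ X 0)
    (hmulX : ∀ r s : S, ∀ a ∈ X r, ∀ b ∈ X s,
      a * b ∈ ⨆ (t : S) (_ : t ≤ r + s), X t)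
    (π : S → (A →ₗ[k] A))
    (hπ_mem : ∀ (t : S) (a : A), π t a ∈ X t)
    (hπ_id : ∀ t : S, ∀ x ∈ X t, π t x = x)
    (hπ_ne : ∀ s t : S, s ≠ t → ∀ x ∈ X s, π t x = 0)
    {B : Type*} [Ring B] [Algebra k B]
    (e : A ≃ₗ[k] B)
    (he_one : e 1 = 1)
    (he_mul : ∀ r s : S, ∀ x ∈ X r, ∀ y ∈ X s,
      e x * e y = e (π (r + s) (x * y)))
    (hB : IsNoetherianRing B) :
    IsNoetherianRing A :=
  gr_noetherian_implies_noetherian_general hmono hstrict hwf X hinternal hmulX π hπ_mem hπ_id hπ_ne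
    e he_mul hB
end

section
/- Suppose A is generated as a k-algebra by elements u_1, …, u_m such that for all 1 ≤ j < i ≤ m there exist a nonzero scalar q_{ij} ∈ k and scalars α^{ij}_{st}, β^{ij}_{st} ∈ k (for 1 ≤ s ≤ j−1 and 1 ≤ t ≤ m) satisfying u_i u_j = q_{ij} u_j u_i + Σ_{s=1}^{j−1} Σ_{t=1}^{m} ( α^{ij}_{st} u_s u_t + β^{ij}_{st} u_t u_s ). Then A is a Noetherian ring. -/
/-!
Give `u j` the weight `2 ^ (m + 1) - 2 ^ (m - j)` and filter `A` by the spans `F n` of the ordered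
monomials `U a = u 0 ^ a 0 * ⋯ * u (m - 1) ^ a (m - 1)` of weight `< n`. With these weights every
correction term in the relation for `u i * u j` has lower weight than `u i * u j`, so modulo lower
weight the ordered monomials multiply as in a quantum affine space:
`U a * U b ≡ twist q a b • U (a + b)`.

To a left ideal `I` attach the space of symbols `v : Lex (ℕ^m) →₀ k` whose weight-`n` part lies in
`I ∩ F (n + 1) + F n` for every `n`. This space is stable under the twisted shifts that model left
multiplication by `U a`, so its lex-leading exponents form an upper set of `ℕ^m`; and it
determines `I` among the left ideals containing `I`. Since a space of symbols is determined by its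
leading exponents among the spaces containing it, and upper sets of `ℕ^m` satisfy the ascending
chain condition (Dickson's lemma), so do the left ideals of `A`.
-/

open Finsupp

theorem List.prod_map_eq_mul_of_sorted {ι M : Type*} [LinearOrder ι] [Monoid M]
    {f g : ι → M} {i : ι} {x : M} (hgi : g i = x * f i) (hg : ∀ r ≠ i, g r = f r) :
    ∀ {l : List ι}, l.Pairwise (· < ·) → i ∈ l → (∀ r ∈ l, r < i → f r = 1) →
      (l.map g).prod = x * (l.map f).prod
  | [], _, hi, _ => absurd hi List.not_mem_nil
  | r :: t, hl, hi, hone => by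
    obtain ⟨hrt, ht⟩ := List.pairwise_cons.1 hl
    by_cases hri : r = i
    · subst hri
      have : t.map g = t.map f :=
        List.map_congr_left fun s hs => hg s (hrt s hs).ne'
      simp only [List.map_cons, List.prod_cons, hgi, this, mul_assoc]
    · have hit : i ∈ t := (List.mem_cons.1 hi).resolve_left (Ne.symm hri)
      have hfr : f r = 1 := hone r List.mem_cons_self (hrt i hit)
      simp only [List.map_cons, List.prod_cons, hg r hri, hfr, one_mul]
      exact List.prod_map_eq_mul_of_sorted hgi hg ht hit
        fun s hs => hone s (List.mem_cons_of_mem r hs)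

instance UpperSet.wellFoundedLT {α : Type*} [Preorder α] [WellQuasiOrderedLE α] :
    WellFoundedLT (UpperSet α) := by
  refine ⟨wellFounded_iff_isEmpty_descending_chain.2 ⟨fun ⟨f, hf⟩ => ?_⟩⟩
  choose x hx using fun n => Set.exists_of_ssubset (UpperSet.coe_ssubset_coe.2 (hf n))
  obtain ⟨i, j, hij, hle⟩ := wellQuasiOrdered_le x
  have hsub : (f (i + 1) : Set α) ⊆ f j :=
    UpperSet.coe_subset_coe.2 (antitone_nat_of_succ_le (fun n => (hf n).le) hij)
  exact (hx j).2 ((f j).upper hle (hsub (hx i).1))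

namespace QuasiCommuting

variable {m : ℕ}

/-- Chosen so that `genWeight m s + genWeight m t < genWeight m i + genWeight m j`
whenever `s < j < i`. -/
def genWeight (m : ℕ) (j : Fin m) : ℕ := 2 ^ (m + 1) - 2 ^ (m - j)

lemma genWeight_pos (j : Fin m) : 0 < genWeight m j := by
  have : 2 ^ (m - (j : ℕ)) < 2 ^ (m + 1) := Nat.pow_lt_pow_right (by norm_num) (by omega)
  unfold genWeight; omega

lemma genWeight_add_lt {s j i : Fin m} (hsj : s < j) (hji : j < i) (t : Fin m) :
    genWeight m s + genWeight m t < genWeight m i + genWeight m j := by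
  have hle : ∀ r : Fin m, 2 ^ (m - (r : ℕ)) ≤ 2 ^ (m + 1) := fun r =>
    Nat.pow_le_pow_right (by norm_num) (by omega)
  have hs : 2 * 2 ^ (m - (j : ℕ)) ≤ 2 ^ (m - (s : ℕ)) := by
    rw [← pow_succ']; exact Nat.pow_le_pow_right (by norm_num) (by omega)
  have hi : 2 * 2 ^ (m - (i : ℕ)) ≤ 2 ^ (m - (j : ℕ)) := by
    rw [← pow_succ']; exact Nat.pow_le_pow_right (by norm_num) (by omega)
  have ht : 2 ≤ 2 ^ (m - (t : ℕ)) := by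
    simpa using Nat.pow_le_pow_right (n := 2) (by norm_num) (show 1 ≤ m - (t : ℕ) by omega)
  have := hle s; have := hle t; have := hle i; have := hle j
  unfold genWeight; omega

noncomputable abbrev wdeg : (Fin m →₀ ℕ) →+ ℕ := Finsupp.weight (genWeight m)

lemma wdeg_single (i : Fin m) : wdeg (single i 1) = genWeight m i := by
  simp [wdeg, Finsupp.weight_single]

variable {A : Type*} [Ring A]

def orderedMonomial (u : Fin m → A) (a : Fin m →₀ ℕ) : A :=
  ((List.finRange m).map fun r => u r ^ a r).prod

lemma orderedMonomial_zero (u : Fin m → A) : orderedMonomial u 0 = 1 := by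
  simp [orderedMonomial]

lemma orderedMonomial_single_add (u : Fin m → A) {i : Fin m} {a : Fin m →₀ ℕ}
    (ha : ∀ r < i, a r = 0) : orderedMonomial u (single i 1 + a) = u i * orderedMonomial u a :=
  List.prod_map_eq_mul_of_sorted (by simp [pow_add])
    (fun r hr => by simp [single_eq_of_ne hr]) (List.pairwise_lt_finRange m)
    (List.mem_finRange i) fun r _ hr => by simp [ha r hr]

lemma orderedMonomial_single (u : Fin m → A) (i : Fin m) :
    orderedMonomial u (single i 1) = u i := by
  simpa [orderedMonomial_zero] using orderedMonomial_single_add u (a := 0) (i := i) (by simp)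

lemma exists_eq_single_add {a : Fin m →₀ ℕ} (ha : a ≠ 0) :
    ∃ j a', a = single j 1 + a' ∧ ∀ r < j, a' r = 0 := by
  classical
  have hs := Finsupp.support_nonempty_iff.2 ha
  set j := a.support.min' hs
  have hj : a j ≠ 0 := Finsupp.mem_support_iff.1 (a.support.min'_mem hs)
  refine ⟨j, a - single j 1, ?_, fun r hr => ?_⟩
  · ext r
    by_cases hr : r = j
    · subst hr; simp; omega
    · simp [Ne.symm hr]
  · suffices a r = 0 by simp [this]
    by_contra h
    exact (a.support.min'_le r (Finsupp.mem_support_iff.2 h)).not_gt hr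

section Twist

variable {k : Type*} [Field k] (q : Fin m → Fin m → k)

/-- Sorting `U a * U b` into `U (a + b)` moves each `u i` of `a` past each `u j` of `b` with
`j < i`, at the cost of a factor `q i j` (modulo lower weight). -/
def twist (a b : Fin m →₀ ℕ) : k :=
  ∏ i, ∏ j, (if j < i then q i j else 1) ^ (a i * b j)

lemma twist_zero_left (b : Fin m →₀ ℕ) : twist q 0 b = 1 := by
  simp [twist]

lemma twist_zero_right (a : Fin m →₀ ℕ) : twist q a 0 = 1 := by
  simp [twist]

lemma twist_add_left (a a' b : Fin m →₀ ℕ) : twist q (a + a') b = twist q a b * twist q a' b := by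
  simp only [twist, Finsupp.add_apply, add_mul, pow_add, ← Finset.prod_mul_distrib]

lemma twist_add_right (a b b' : Fin m →₀ ℕ) : twist q a (b + b') = twist q a b * twist q a b' := by
  simp only [twist, Finsupp.add_apply, mul_add, pow_add, ← Finset.prod_mul_distrib]

lemma twist_ne_zero (hq : ∀ i j, j < i → q i j ≠ 0) (a b : Fin m →₀ ℕ) : twist q a b ≠ 0 := by
  refine Finset.prod_ne_zero_iff.2 fun i _ => Finset.prod_ne_zero_iff.2 fun j _ => ?_
  split_ifs with h
  · exact pow_ne_zero _ (hq i j h)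
  · simp

lemma twist_single_left (i : Fin m) (b : Fin m →₀ ℕ) :
    twist q (single i 1) b = ∏ j, (if j < i then q i j else 1) ^ b j := by
  rw [twist, Finset.prod_eq_single i (fun r _ hr => by simp [single_eq_of_ne hr]) (by simp)]
  simp

lemma twist_single_single {i j : Fin m} (h : j < i) :
    twist q (single i 1) (single j 1) = q i j := by
  rw [twist_single_left, Finset.prod_eq_single j (fun r _ hr => by simp [single_eq_of_ne hr])
    (by simp)]
  simp [h]

lemma twist_single_eq_one {i : Fin m} {b : Fin m →₀ ℕ} (hb : ∀ r < i, b r = 0) :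
    twist q (single i 1) b = 1 := by
  rw [twist_single_left]
  refine Finset.prod_eq_one fun j _ => ?_
  split_ifs with h
  · simp [hb j h]
  · simp

end Twist

section Filtration

variable (k : Type*) [Field k] [Algebra k A] (u : Fin m → A)

def filtration (n : ℕ) : Submodule k A :=
  Submodule.span k (orderedMonomial u '' {a | wdeg a < n})

variable {k u}

lemma filtration_mono : Monotone (filtration k u) := fun _ _ h =>
  Submodule.span_mono (Set.image_mono fun _ ha => lt_of_lt_of_le ha h)

lemma filtration_zero : filtration k u 0 = ⊥ := by
  simp [filtration]

lemma orderedMonomial_mem_filtration {a : Fin m →₀ ℕ} {n : ℕ} (h : wdeg a < n) :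
    orderedMonomial u a ∈ filtration k u n :=
  Submodule.subset_span ⟨a, h, rfl⟩

lemma mul_mem_filtration_of_congr {x y : A} {a : Fin m →₀ ℕ} {c : (Fin m →₀ ℕ) → k} {n : ℕ}
    (h : ∀ b, wdeg b < n → x * orderedMonomial u b - c b • orderedMonomial u (a + b) ∈
      filtration k u (wdeg a + wdeg b))
    (hy : y ∈ filtration k u n) : x * y ∈ filtration k u (wdeg a + n) := by
  have : filtration k u n ≤ (filtration k u (wdeg a + n)).comap (LinearMap.mulLeft k x) := by
    refine Submodule.span_le.2 ?_
    rintro _ ⟨b, hb : wdeg b < n, rfl⟩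
    have hlow := filtration_mono (show wdeg a + wdeg b ≤ wdeg a + n by omega) (h b hb)
    have hlead : orderedMonomial u (a + b) ∈ filtration k u (wdeg a + n) :=
      orderedMonomial_mem_filtration (by simpa using hb)
    simpa using add_mem hlow (Submodule.smul_mem _ (c b) hlead)
  exact this hy

variable (k u) in
def correctionSpan (j : Fin m) : Submodule k A :=
  Submodule.span k {x | ∃ s t, s < j ∧ (x = u s * u t ∨ x = u t * u s)}

lemma mul_mem_filtration_of_mem_correctionSpan {i j : Fin m} (hji : j < i) {e : Fin m →₀ ℕ}
    {N : ℕ} (hN : genWeight m i + genWeight m j + wdeg e = N)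
    (hmul : ∀ s n, genWeight m s + n ≤ N → ∀ y ∈ filtration k u n,
      u s * y ∈ filtration k u (genWeight m s + n))
    {x : A} (hx : x ∈ correctionSpan k u j) : x * orderedMonomial u e ∈ filtration k u N := by
  have pair : ∀ s t, genWeight m s + genWeight m t < genWeight m i + genWeight m j →
      u s * u t * orderedMonomial u e ∈ filtration k u N := fun s t hst => by
    rw [mul_assoc]
    refine filtration_mono (by omega) (hmul s _ (by omega) _
      (hmul t (wdeg e + 1) (by omega) _ (orderedMonomial_mem_filtration (by omega))))
  have : correctionSpan k u j ≤
      (filtration k u N).comap (LinearMap.mulRight k (orderedMonomial u e)) := by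
    refine Submodule.span_le.2 ?_
    rintro _ ⟨s, t, hs, rfl | rfl⟩
    · exact pair s t (genWeight_add_lt hs hji t)
    · exact pair t s (by have := genWeight_add_lt hs hji t; omega)
  exact this hx

end Filtration

section ProductFormula

variable {k : Type*} [Field k] [Algebra k A] {u : Fin m → A} {q : Fin m → Fin m → k}
  (hcor : ∀ i j, j < i → u i * u j - q i j • (u j * u i) ∈ correctionSpan k u j)
include hcor

lemma generator_mul_orderedMonomial (i : Fin m) (e : Fin m →₀ ℕ) :
    u i * orderedMonomial u e - twist q (single i 1) e • orderedMonomial u (single i 1 + e) ∈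
      filtration k u (genWeight m i + wdeg e) := by
  suffices ∀ N i e, genWeight m i + wdeg e = N →
      u i * orderedMonomial u e - twist q (single i 1) e • orderedMonomial u (single i 1 + e) ∈
        filtration k u N from this _ i e rfl
  intro N
  induction N using Nat.strong_induction_on with
  | _ N IH =>
  intro i e hN
  have hmul : ∀ s n, genWeight m s + n ≤ N → ∀ y ∈ filtration k u n,
      u s * y ∈ filtration k u (genWeight m s + n) := fun s n hsn y hy => by
    simpa [wdeg_single] using mul_mem_filtration_of_congr (a := single s 1)
      (fun b hb => by simpa [wdeg_single] using IH _ (by omega) s b rfl) hy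
  by_cases he : e = 0
  · simp [he, orderedMonomial_single, orderedMonomial_zero, twist_zero_right]
  obtain ⟨j, e', rfl, he'⟩ := exists_eq_single_add he
  rcases le_or_gt i j with hij | hji
  · have hlow : ∀ r < i, (single j 1 + e' : Fin m →₀ ℕ) r = 0 := fun r hr => by
      simp [single_eq_of_ne (hr.trans_le hij).ne, he' r (hr.trans_le hij)]
    rw [orderedMonomial_single_add u hlow, twist_single_eq_one q hlow, one_smul, sub_self]
    exact zero_mem _
  have hNe : genWeight m i + genWeight m j + wdeg e' = N := by
    simp only [map_add, wdeg_single] at hN; omega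
  have hU : orderedMonomial u (single i 1 + (single j 1 + e')) =
      u j * orderedMonomial u (single i 1 + e') := by
    rw [add_left_comm, orderedMonomial_single_add u fun r hr => by
      simp [single_eq_of_ne (hr.trans hji).ne, he' r hr]]
  -- swap `u i` past `u j`, then move `u i` through `U e'` by induction
  have key : u i * (u j * orderedMonomial u e') -
      (q i j * twist q (single i 1) e') • (u j * orderedMonomial u (single i 1 + e')) =
      (u i * u j - q i j • (u j * u i)) * orderedMonomial u e' +
      q i j • (u j * (u i * orderedMonomial u e' -
        twist q (single i 1) e' • orderedMonomial u (single i 1 + e'))) := by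
    simp only [sub_mul, mul_sub, smul_mul_assoc, mul_smul_comm, mul_assoc]
    module
  have := genWeight_pos j
  have hinner := hmul j (genWeight m i + wdeg e') (by omega) _ (IH _ (by omega) i e' rfl)
  rw [orderedMonomial_single_add u he', hU, twist_add_right, twist_single_single q hji, key]
  exact add_mem (mul_mem_filtration_of_mem_correctionSpan hji hNe hmul (hcor i j hji))
    (Submodule.smul_mem _ _ (filtration_mono (by omega) hinner))

lemma generator_mul_mem_filtration (i : Fin m) {n : ℕ} {y : A} (hy : y ∈ filtration k u n) :
    u i * y ∈ filtration k u (genWeight m i + n) := by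
  simpa [wdeg_single] using mul_mem_filtration_of_congr (a := single i 1)
    (fun b _ => by simpa [wdeg_single] using generator_mul_orderedMonomial hcor i b) hy

theorem orderedMonomial_mul_orderedMonomial (a b : Fin m →₀ ℕ) :
    orderedMonomial u a * orderedMonomial u b - twist q a b • orderedMonomial u (a + b) ∈
      filtration k u (wdeg a + wdeg b) := by
  induction h : wdeg a using Nat.strong_induction_on generalizing a with
  | _ N IH =>
  by_cases ha : a = 0
  · simp [ha, orderedMonomial_zero, twist_zero_left]
  obtain ⟨i, a', rfl, ha'⟩ := exists_eq_single_add ha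
  have hN : N = genWeight m i + wdeg a' := by rw [← h]; simp [wdeg_single]
  have hrest := IH (wdeg a') (by have := genWeight_pos i; omega) a' rfl
  have hgen := generator_mul_orderedMonomial hcor i (a' + b)
  have htwist : twist q (single i 1 + a') b =
      twist q a' b * twist q (single i 1) (a' + b) := by
    rw [twist_add_left, twist_add_right, twist_single_eq_one q ha', one_mul, mul_comm]
  have key : orderedMonomial u (single i 1 + a') * orderedMonomial u b -
      twist q (single i 1 + a') b • orderedMonomial u (single i 1 + a' + b) =
      twist q a' b • (u i * orderedMonomial u (a' + b) -
        twist q (single i 1) (a' + b) • orderedMonomial u (single i 1 + (a' + b))) +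
      u i * (orderedMonomial u a' * orderedMonomial u b -
        twist q a' b • orderedMonomial u (a' + b)) := by
    rw [orderedMonomial_single_add u ha', htwist, add_assoc, mul_assoc]
    simp only [mul_sub, mul_smul_comm]
    module
  have hdeg : N + wdeg b = genWeight m i + wdeg (a' + b) := by simp [hN, add_assoc]
  rw [key, hdeg]
  refine add_mem (Submodule.smul_mem _ _ hgen) ?_
  simpa using generator_mul_mem_filtration hcor i hrest

lemma orderedMonomial_mul_mem_filtration (a : Fin m →₀ ℕ) {n : ℕ} {y : A}
    (hy : y ∈ filtration k u n) : orderedMonomial u a * y ∈ filtration k u (wdeg a + n) :=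
  mul_mem_filtration_of_congr (fun b _ => orderedMonomial_mul_orderedMonomial hcor a b) hy

lemma mul_mem_filtration_add {n n' : ℕ} {x y : A} (hx : x ∈ filtration k u n)
    (hy : y ∈ filtration k u n') : x * y ∈ filtration k u (n + n') := by
  have : filtration k u n ≤ (filtration k u (n + n')).comap (LinearMap.mulRight k y) := by
    refine Submodule.span_le.2 ?_
    rintro _ ⟨a, ha : wdeg a < n, rfl⟩
    exact filtration_mono (by omega) (orderedMonomial_mul_mem_filtration hcor a hy)
  exact this hx

lemma exists_mem_filtration (hgen : Algebra.adjoin k (Set.range u) = ⊤) (x : A) :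
    ∃ n, x ∈ filtration k u n := by
  have hx : x ∈ Algebra.adjoin k (Set.range u) := hgen ▸ Algebra.mem_top
  induction hx using Algebra.adjoin_induction with
  | mem _ hx =>
    obtain ⟨i, rfl⟩ := hx
    exact ⟨genWeight m i + 1, orderedMonomial_single u i ▸
      orderedMonomial_mem_filtration (by simp [wdeg_single])⟩
  | algebraMap c =>
    refine ⟨1, ?_⟩
    rw [Algebra.algebraMap_eq_smul_one, ← orderedMonomial_zero u]
    exact Submodule.smul_mem _ c (orderedMonomial_mem_filtration (by simp))
  | add x y _ _ hx hy =>
    obtain ⟨n, hx⟩ := hx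
    obtain ⟨n', hy⟩ := hy
    exact ⟨max n n', add_mem (filtration_mono (le_max_left n n') hx)
      (filtration_mono (le_max_right n n') hy)⟩
  | mul x y _ _ hx hy =>
    obtain ⟨n, hx⟩ := hx
    obtain ⟨n', hy⟩ := hy
    exact ⟨n + n', mul_mem_filtration_add hcor hx hy⟩

end ProductFormula

section LeadingSet

variable {ι k : Type*} [LinearOrder ι] [Field k]

def leadingSet (V : Submodule k (ι →₀ k)) : Set ι := {d | ∃ v ∈ V, v.support.max = d}

lemma leadingSet_mono {V W : Submodule k (ι →₀ k)} (h : V ≤ W) : leadingSet V ⊆ leadingSet W :=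
  fun _ ⟨v, hv, hd⟩ => ⟨v, h hv, hd⟩

/-- Gaussian elimination of leading terms. -/
theorem le_of_leadingSet_subset [WellFoundedLT ι] {V W : Submodule k (ι →₀ k)} (hVW : V ≤ W)
    (h : leadingSet W ⊆ leadingSet V) : W ≤ V := by
  classical
  intro v hv
  induction hd : v.support.max using WellFoundedLT.induction generalizing v with
  | _ d IH =>
  cases d with
  | bot => rw [Finset.max_eq_bot, Finsupp.support_eq_empty] at hd; simp [hd]
  | coe d =>
  obtain ⟨w, hw, hwd⟩ := h ⟨v, hv, hd⟩
  have hvd : v d ≠ 0 := Finsupp.mem_support_iff.1 (Finset.mem_of_max hd)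
  have hwd' : w d ≠ 0 := Finsupp.mem_support_iff.1 (Finset.mem_of_max hwd)
  set v' := v - (v d / w d) • w
  have hv'W : v' ∈ W := sub_mem hv (Submodule.smul_mem _ _ (hVW hw))
  have hlt : v'.support.max < d := by
    refine (Finset.sup_lt_iff (WithBot.bot_lt_coe d)).2 fun e he => ?_
    have hle : e ≤ d := by
      rcases Finset.mem_union.1 (Finsupp.support_sub he) with he | he
      · exact Finset.le_max_of_eq he hd
      · exact Finset.le_max_of_eq (Finsupp.support_smul he) hwd
    refine WithBot.coe_lt_coe.2 (lt_of_le_of_ne hle ?_)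
    rintro rfl
    simp [v', div_mul_cancel₀ _ hwd'] at he
  have hv' := IH _ hlt hv'W rfl
  simpa [v'] using add_mem hv' (Submodule.smul_mem V (v d / w d) hw)

end LeadingSet

section Symbols

variable {k : Type*} [Field k] [Algebra k A] {u : Fin m → A} {q : Fin m → Fin m → k}

variable (q) in
/-- Models left multiplication by `orderedMonomial u a` on symbols. -/
noncomputable def twistedShift (a : Fin m →₀ ℕ) :
    (Lex (Fin m →₀ ℕ) →₀ k) →ₗ[k] Lex (Fin m →₀ ℕ) →₀ k :=
  Finsupp.lsum k fun e => twist q a (ofLex e) • Finsupp.lsingle (toLex a + e)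

lemma twistedShift_single (a : Fin m →₀ ℕ) (e : Lex (Fin m →₀ ℕ)) (c : k) :
    twistedShift q a (single e c) = single (toLex a + e) (twist q a (ofLex e) * c) := by
  simp [twistedShift, smul_single, mul_comm]

lemma twistedShift_apply_add (a : Fin m →₀ ℕ) (v : Lex (Fin m →₀ ℕ) →₀ k)
    (e : Lex (Fin m →₀ ℕ)) : twistedShift q a v (toLex a + e) = twist q a (ofLex e) * v e := by
  classical
  induction v using Finsupp.induction_linear with
  | zero => simp
  | add v w hv hw => simp [hv, hw, mul_add]
  | single e' c => by_cases h : e' = e <;> simp [twistedShift_single, h]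

lemma support_twistedShift_subset (a : Fin m →₀ ℕ) (v : Lex (Fin m →₀ ℕ) →₀ k) :
    (twistedShift q a v).support ⊆ v.support.map (addLeftEmbedding (toLex a)) := by
  classical
  have : twistedShift q a v = v.sum fun e c => single (toLex a + e) (twist q a (ofLex e) * c) := by
    rw [twistedShift, Finsupp.lsum_apply]
    exact Finsupp.sum_congr fun e _ => by simp [smul_single]
  rw [this]
  refine Finsupp.support_sum.trans (Finset.biUnion_subset.2 fun e he => ?_)
  exact (Finsupp.support_single_subset).trans (by simpa using he)

lemma max_support_twistedShift (hq : ∀ i j, j < i → q i j ≠ 0) (a : Fin m →₀ ℕ)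
    {v : Lex (Fin m →₀ ℕ) →₀ k} {d : Lex (Fin m →₀ ℕ)} (hd : v.support.max = d) :
    (twistedShift q a v).support.max = ↑(toLex a + d) := by
  refine le_antisymm (Finset.max_le fun x hx => ?_) (Finset.le_max ?_)
  · obtain ⟨e, he, rfl⟩ := Finset.mem_map.1 (support_twistedShift_subset a v hx)
    exact WithBot.coe_le_coe.2 ((add_le_add_iff_left _).2 (Finset.le_max_of_eq he hd))
  · rw [Finsupp.mem_support_iff, twistedShift_apply_add]
    exact mul_ne_zero (twist_ne_zero q hq _ _)
      (Finsupp.mem_support_iff.1 (Finset.mem_of_max hd))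

variable (k u) in
noncomputable def symbolEval (n : ℕ) : (Lex (Fin m →₀ ℕ) →₀ k) →ₗ[k] A :=
  Finsupp.linearCombination k fun e => if wdeg (ofLex e) = n then orderedMonomial u (ofLex e) else 0

lemma symbolEval_single (n : ℕ) (e : Lex (Fin m →₀ ℕ)) (c : k) :
    symbolEval k u n (single e c) = if wdeg (ofLex e) = n then c • orderedMonomial u (ofLex e)
      else 0 := by
  simp [symbolEval, smul_ite]

lemma symbolEval_eq_zero_of_mem_supported {n n' : ℕ} (hn : n' ≠ n)
    {w : Lex (Fin m →₀ ℕ) →₀ k} (hw : w ∈ supported k k {e | wdeg (ofLex e) = n}) :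
    symbolEval k u n' w = 0 := by
  rw [symbolEval, Finsupp.linearCombination_apply]
  refine Finset.sum_eq_zero fun e he => ?_
  simp [show wdeg (ofLex e) ≠ n' from (hw he).symm ▸ hn.symm]

lemma filtration_succ_le (n : ℕ) : filtration k u (n + 1) ≤
    (supported k k {e | wdeg (ofLex e) = n}).map (symbolEval k u n) ⊔ filtration k u n := by
  refine Submodule.span_le.2 ?_
  rintro _ ⟨a, ha : wdeg a < n + 1, rfl⟩
  rcases (Nat.lt_succ_iff.1 ha).eq_or_lt with ha | ha
  · refine Submodule.mem_sup_left ⟨single (toLex a) 1, ?_, ?_⟩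
    · exact single_mem_supported k 1 (show wdeg (ofLex (toLex a)) = n from ha)
    · simp [symbolEval_single, ha]
  · exact Submodule.mem_sup_right (orderedMonomial_mem_filtration ha)

variable (k u) in
/-- The preimage in `F (n + 1)` of the degree-`n` part of the associated graded of `I`. -/
def grComponent (I : Submodule A A) (n : ℕ) : Submodule k A :=
  I.restrictScalars k ⊓ filtration k u (n + 1) ⊔ filtration k u n

variable (k u) in
/-- The symbols whose weight-`n` part is, for every `n`, a leading form of an element of `I`. -/
noncomputable def symbolModule (I : Submodule A A) : Submodule k (Lex (Fin m →₀ ℕ) →₀ k) :=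
  ⨅ n, (grComponent k u I n).comap (symbolEval k u n)

lemma mem_symbolModule {I : Submodule A A} {v : Lex (Fin m →₀ ℕ) →₀ k} :
    v ∈ symbolModule k u I ↔ ∀ n, symbolEval k u n v ∈ grComponent k u I n := by
  simp [symbolModule]

variable (k u) in
def leadingExponents (I : Submodule A A) : Set (Fin m →₀ ℕ) :=
  toLex ⁻¹' leadingSet (symbolModule k u I)

lemma symbolModule_mono : Monotone (symbolModule k u) := fun I J hIJ _ hv =>
  mem_symbolModule.2 fun n => sup_le_sup_right (inf_le_inf_right _
    (show I.restrictScalars k ≤ J.restrictScalars k from hIJ)) _ (mem_symbolModule.1 hv n)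

lemma leadingExponents_mono : Monotone (leadingExponents k u) := fun _ _ h =>
  Set.preimage_mono (leadingSet_mono (ι := Lex (Fin m →₀ ℕ)) (symbolModule_mono h))

lemma symbolModule_le_of_leadingExponents_subset {I J : Submodule A A} (hIJ : I ≤ J)
    (h : leadingExponents k u J ⊆ leadingExponents k u I) :
    symbolModule k u J ≤ symbolModule k u I :=
  le_of_leadingSet_subset (symbolModule_mono hIJ)
    (toLex.surjective.preimage_subset_preimage_iff.1 h)

lemma symbolEval_twistedShift_of_lt {a : Fin m →₀ ℕ} {n : ℕ} (hn : n < wdeg a)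
    (v : Lex (Fin m →₀ ℕ) →₀ k) : symbolEval k u n (twistedShift q a v) = 0 := by
  induction v using Finsupp.induction_linear with
  | zero => simp
  | add v w hv hw => simp [hv, hw]
  | single e c =>
    rw [twistedShift_single, symbolEval_single, if_neg]
    simp only [ofLex_add, ofLex_toLex, map_add]
    omega

section

variable (hcor : ∀ i j, j < i → u i * u j - q i j • (u j * u i) ∈ correctionSpan k u j)
include hcor

lemma orderedMonomial_mul_mem_grComponent {I : Submodule A A} (a : Fin m →₀ ℕ) {n : ℕ} {y : A}
    (hy : y ∈ grComponent k u I n) : orderedMonomial u a * y ∈ grComponent k u I (wdeg a + n) := by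
  obtain ⟨y, hyIF, z, hz, rfl⟩ := Submodule.mem_sup.1 hy
  obtain ⟨hyI, hyF⟩ := Submodule.mem_inf.1 hyIF
  have hI : orderedMonomial u a * y ∈ I := I.smul_mem (orderedMonomial u a) hyI
  rw [mul_add]
  refine add_mem (Submodule.mem_sup_left (Submodule.mem_inf.2 ⟨hI, ?_⟩))
    (Submodule.mem_sup_right (orderedMonomial_mul_mem_filtration hcor a hz))
  simpa [add_assoc] using orderedMonomial_mul_mem_filtration hcor a hyF

lemma symbolEval_twistedShift_sub_mem (a : Fin m →₀ ℕ) (n : ℕ) (v : Lex (Fin m →₀ ℕ) →₀ k) :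
    symbolEval k u (wdeg a + n) (twistedShift q a v) - orderedMonomial u a * symbolEval k u n v ∈
      filtration k u (wdeg a + n) := by
  induction v using Finsupp.induction_linear with
  | zero => simp
  | add v w hv hw => simpa [mul_add, add_sub_add_comm] using add_mem hv hw
  | single e c =>
    rw [twistedShift_single, symbolEval_single, symbolEval_single]
    by_cases h : wdeg (ofLex e) = n
    · have := Submodule.smul_mem _ (-c)
        (orderedMonomial_mul_orderedMonomial hcor (u := u) (q := q) a (ofLex e))
      simp only [ofLex_add, ofLex_toLex, map_add, h, if_true]
      rw [h] at this
      convert this using 1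
      rw [mul_smul_comm]
      module
    · simp [h]

lemma twistedShift_mem_symbolModule {I : Submodule A A} (a : Fin m →₀ ℕ)
    {v : Lex (Fin m →₀ ℕ) →₀ k} (hv : v ∈ symbolModule k u I) :
    twistedShift q a v ∈ symbolModule k u I := by
  refine mem_symbolModule.2 fun n' => ?_
  rcases lt_or_ge n' (wdeg a) with hlt | hge
  · rw [symbolEval_twistedShift_of_lt hlt]
    exact zero_mem _
  · obtain ⟨n, rfl⟩ := Nat.exists_eq_add_of_le hge
    have hlow : _ ∈ grComponent k u I (wdeg a + n) :=
      Submodule.mem_sup_right (symbolEval_twistedShift_sub_mem hcor a n v)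
    simpa only [sub_add_cancel] using
      add_mem hlow (orderedMonomial_mul_mem_grComponent hcor a (mem_symbolModule.1 hv n))

theorem le_of_symbolModule_le (hgen : Algebra.adjoin k (Set.range u) = ⊤)
    {I J : Submodule A A} (hIJ : I ≤ J) (h : symbolModule k u J ≤ symbolModule k u I) :
    J ≤ I := by
  suffices ∀ n, ∀ x ∈ J, x ∈ filtration k u n → x ∈ I from fun x hx =>
    (exists_mem_filtration hcor hgen x).elim fun n hn => this n x hx hn
  intro n
  induction n with
  | zero =>
    rintro x - hx
    rw [filtration_zero, Submodule.mem_bot] at hx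
    exact hx ▸ zero_mem I
  | succ n ih =>
  intro x hxJ hx
  obtain ⟨_, ⟨w, hw, rfl⟩, r, hr, rfl⟩ := Submodule.mem_sup.1 (filtration_succ_le n hx)
  have hwJ : w ∈ symbolModule k u J := by
    refine mem_symbolModule.2 fun n' => ?_
    rcases eq_or_ne n' n with rfl | hn'
    · have hmain : _ ∈ grComponent k u J n' :=
        Submodule.mem_sup_left (Submodule.mem_inf.2 ⟨hxJ, hx⟩)
      have hlow : -r ∈ grComponent k u J n' := Submodule.mem_sup_right (neg_mem hr)
      simpa using add_mem hmain hlow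
    · rw [symbolEval_eq_zero_of_mem_supported hn' hw]
      exact zero_mem _
  obtain ⟨y, hyIF, z, hz, hyz⟩ := Submodule.mem_sup.1 (mem_symbolModule.1 (h hwJ) n)
  obtain ⟨hyI, -⟩ := Submodule.mem_inf.1 hyIF
  have hzr : z + r ∈ I := by
    refine ih _ ?_ (add_mem hz hr)
    have : z + r = symbolEval k u n w + r - y := by rw [← hyz]; abel
    exact this ▸ sub_mem hxJ (hIJ hyI)
  have : symbolEval k u n w + r = y + (z + r) := by rw [← hyz]; abel
  exact this ▸ add_mem hyI hzr

lemma isUpperSet_leadingExponents (hq : ∀ i j, j < i → q i j ≠ 0) (I : Submodule A A) :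
    IsUpperSet (leadingExponents k u I) := by
  rintro d d' hdd' ⟨v, hv, hvd⟩
  refine ⟨twistedShift q (d' - d) v, twistedShift_mem_symbolModule hcor _ hv, ?_⟩
  rw [max_support_twistedShift hq _ hvd, ← toLex_add, tsub_add_cancel_of_le hdd']

theorem isNoetherianRing_of_mem_correctionSpan (hq : ∀ i j, j < i → q i j ≠ 0)
    (hgen : Algebra.adjoin k (Set.range u) = ⊤) : IsNoetherianRing A := by
  rw [IsNoetherianRing, isNoetherian_iff']
  refine StrictAnti.wellFoundedGT (f := fun I => (⟨leadingExponents k u I,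
    isUpperSet_leadingExponents hcor hq I⟩ : UpperSet (Fin m →₀ ℕ))) fun I J hIJ => ?_
  refine UpperSet.coe_ssubset_coe.1 ⟨leadingExponents_mono hIJ.le, fun hJI => hIJ.not_ge ?_⟩
  exact le_of_symbolModule_le hcor hgen hIJ.le
    (symbolModule_le_of_leadingExponents_subset hIJ.le hJI)

end

end Symbols

end QuasiCommuting

/-- Let `k` be a field and `A` an associative unital `k`-algebra generated by
elements `u 0, …, u (m-1)` such that for all `j < i` there are a nonzero scalar `q` and scalars
`α s t`, `β s t` (for `s < j` and arbitrary `t`) with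
`u i * u j = q • (u j * u i) + ∑_{s < j} ∑_t (α s t • (u s * u t) + β s t • (u t * u s))`.
Then `A` is a Noetherian ring. -/
theorem noetherian_of_quasi_commuting_generators
    {k : Type*} [Field k] {A : Type*} [Ring A] [Algebra k A]
    {m : ℕ} (u : Fin m → A)
    (hgen : Algebra.adjoin k (Set.range u) = ⊤)
    (hrel : ∀ i j : Fin m, j < i →
      ∃ (q : k) (α β : Fin m → Fin m → k), q ≠ 0 ∧
        u i * u j = q • (u j * u i) +
          ∑ s ∈ Finset.univ.filter (fun s => s < j), ∑ t : Fin m,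
            (α s t • (u s * u t) + β s t • (u t * u s))) :
    IsNoetherianRing A := by
  choose! q α β hq hrel using hrel
  refine QuasiCommuting.isNoetherianRing_of_mem_correctionSpan (q := q) (fun i j hji => ?_) hq hgen
  rw [hrel i j hji, add_sub_cancel_left]
  refine Submodule.sum_mem _ fun s hs => Submodule.sum_mem _ fun t _ => add_mem ?_ ?_ <;>
    refine Submodule.smul_mem _ _ (Submodule.subset_span ⟨s, t, (Finset.mem_filter.1 hs).2, ?_⟩)
  exacts [Or.inl rfl, Or.inr rfl]
end

section
/- If the associated graded algebra gr(A) is finitely generated as a k-algebra, then A is finitely generated as a k-algebra. -/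
/-!
Choose finitely many homogeneous `G ⊆ A` whose images generate `gr A`, and let `R` be the
subalgebra of `A` they generate. The leading forms of elements of `R` are closed under the graded
product and contain `G`, so they span `gr A`; hence `X s ≤ R ⊔ filtrationLT X s` for every `s`, and
well-founded induction on `s` gives `X s ≤ R`.
-/

open Submodule

namespace FilteredAlgebra

variable {k S A : Type*} [CommRing k] [Ring A] [Algebra k A]

theorem le_of_span_homogeneous_eq_top {X : S → Submodule k A} {π : S → A →ₗ[k] A}
    (hπ_id : ∀ t, ∀ x ∈ X t, π t x = x) (hπ_ne : ∀ s t, s ≠ t → ∀ x ∈ X s, π t x = 0)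
    {N : S → Submodule k A} {H : Set A} (hH : span k H = ⊤)
    (hHN : ∀ x ∈ H, ∃ r, x ∈ X r ∧ x ∈ N r) (s : S) : X s ≤ N s := by
  intro x hx
  have hspan : π s x ∈ span k (π s '' H) := by
    rw [← map_span, hH]
    exact mem_map_of_mem mem_top
  rw [hπ_id s x hx] at hspan
  refine span_le.2 ?_ hspan
  rintro _ ⟨y, hy, rfl⟩
  obtain ⟨r, hyr, hyN⟩ := hHN y hy
  by_cases hrs : r = s
  · subst hrs
    rwa [hπ_id r y hyr]
  · rw [hπ_ne r s hrs y hyr]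
    exact zero_mem _

theorem exists_finset_homogeneous_adjoin_eq_top {B : Type*} [Ring B] [Algebra k B]
    [Algebra.FiniteType k B] {X : S → Submodule k A} (hX : ⨆ s, X s = ⊤) (e : A ≃ₗ[k] B) :
    ∃ G : Finset A, (∀ g ∈ G, ∃ s, g ∈ X s) ∧ Algebra.adjoin k (e '' G) = ⊤ := by
  classical
  obtain ⟨T, hT⟩ := Algebra.FiniteType.out (R := k) (A := B)
  have hTspan : (T.image e.symm : Set A) ⊆ span k (⋃ s, (X s : Set A)) := by
    rw [← iSup_eq_span, hX]
    exact fun _ _ => mem_top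
  obtain ⟨G, hG, hTG⟩ := subset_span_finite_of_subset_span hTspan
  refine ⟨G, fun g hg => Set.mem_iUnion.1 (hG hg), eq_top_iff.2 (hT ▸ Algebra.adjoin_le ?_)⟩
  intro b hb
  have hb' : e.symm b ∈ span k (G : Set A) := hTG (Finset.mem_image_of_mem _ hb)
  apply Algebra.span_le_adjoin k
  rw [← LinearEquiv.coe_coe, ← map_span]
  exact ⟨e.symm b, hb', e.apply_symm_apply b⟩

variable [PartialOrder S]

def filtrationLE (X : S → Submodule k A) (s : S) : Submodule k A := ⨆ (t : S) (_ : t ≤ s), X t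

def filtrationLT (X : S → Submodule k A) (s : S) : Submodule k A := ⨆ (t : S) (_ : t < s), X t

/-- The homogeneous `x ∈ X s` that agree with an element of `R` modulo lower order, i.e. the
leading forms of elements of `R`. -/
def leadingForms (X : S → Submodule k A) (R : Subalgebra k A) : Set A :=
  {x | ∃ s, x ∈ X s ∧ x ∈ Subalgebra.toSubmodule R ⊔ filtrationLT X s}

variable {X : S → Submodule k A}

theorem le_filtrationLE (s : S) : X s ≤ filtrationLE X s :=
  le_iSup₂_of_le s le_rfl le_rfl

theorem le_filtrationLT {s t : S} (h : t < s) : X t ≤ filtrationLT X s :=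
  le_iSup₂_of_le t h le_rfl

theorem filtrationLT_le_filtrationLE (s : S) : filtrationLT X s ≤ filtrationLE X s :=
  iSup₂_le fun t h => le_iSup₂_of_le t h.le le_rfl

theorem sub_proj_mem_filtrationLT {π : S → A →ₗ[k] A} (hπ_id : ∀ t, ∀ x ∈ X t, π t x = x)
    (hπ_ne : ∀ s t, s ≠ t → ∀ x ∈ X s, π t x = 0) {s : S} {a : A}
    (ha : a ∈ filtrationLE X s) : a - π s a ∈ filtrationLT X s := by
  have : filtrationLE X s ≤ (filtrationLT X s).comap (LinearMap.id - π s) :=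
    iSup₂_le fun t hts x hx => by
      rcases hts.eq_or_lt with rfl | hlt
      · simp [hπ_id t x hx]
      · simpa [hπ_ne t s hlt.ne x hx] using le_filtrationLT hlt hx
  simpa using this ha

theorem le_of_le_sup_filtrationLT [WellFoundedLT S] {N : Submodule k A}
    (h : ∀ s, X s ≤ N ⊔ filtrationLT X s) (s : S) : X s ≤ N := by
  induction s using WellFoundedLT.induction with
  | _ s ih => exact (h s).trans (sup_le le_rfl (iSup₂_le fun t ht => ih t ht))

variable [AddCommMonoid S]

theorem iSup₂_mul_iSup₂_le_filtrationLT (hmul : ∀ r s, X r * X s ≤ filtrationLE X (r + s))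
    {p q : S → Prop} {u : S} (hpq : ∀ r s, p r → q s → r + s < u) :
    (⨆ (r : S) (_ : p r), X r) * (⨆ (s : S) (_ : q s), X s) ≤ filtrationLT X u := by
  simp only [iSup_mul, mul_iSup]
  refine iSup₂_le fun s hs => iSup₂_le fun r hr => (hmul r s).trans ?_
  exact iSup₂_le fun t ht => le_filtrationLT (ht.trans_lt (hpq r s hr hs))

variable [AddLeftStrictMono S]

theorem filtrationLE_mul_filtrationLT_le (hmul : ∀ r s, X r * X s ≤ filtrationLE X (r + s))
    (r s : S) : filtrationLE X r * filtrationLT X s ≤ filtrationLT X (r + s) :=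
  have := addLeftMono_of_addLeftStrictMono S
  iSup₂_mul_iSup₂_le_filtrationLT hmul fun _ _ => add_lt_add_of_le_of_lt

theorem filtrationLT_mul_filtrationLE_le (hmul : ∀ r s, X r * X s ≤ filtrationLE X (r + s))
    (r s : S) : filtrationLT X r * filtrationLE X s ≤ filtrationLT X (r + s) :=
  have := addLeftMono_of_addLeftStrictMono S
  iSup₂_mul_iSup₂_le_filtrationLT hmul fun _ _ => add_lt_add_of_lt_of_le

theorem proj_mul_mem_leadingForms (hmul : ∀ r s, X r * X s ≤ filtrationLE X (r + s))
    {π : S → A →ₗ[k] A} (hπ_mem : ∀ t a, π t a ∈ X t) (hπ_id : ∀ t, ∀ x ∈ X t, π t x = x)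
    (hπ_ne : ∀ s t, s ≠ t → ∀ x ∈ X s, π t x = 0) {R : Subalgebra k A} {r s : S} {x y : A}
    (hx : x ∈ X r) (hxR : x ∈ Subalgebra.toSubmodule R ⊔ filtrationLT X r)
    (hy : y ∈ X s) (hyR : y ∈ Subalgebra.toSubmodule R ⊔ filtrationLT X s) :
    π (r + s) (x * y) ∈ leadingForms X R := by
  refine ⟨r + s, hπ_mem _ _, ?_⟩
  obtain ⟨ρ, hρ, l, hl, rfl⟩ := mem_sup.1 hxR
  obtain ⟨ρ', hρ', l', hl', rfl⟩ := mem_sup.1 hyR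
  have hρ_le : ρ ∈ filtrationLE X r := by
    simpa using sub_mem (le_filtrationLE r hx) (filtrationLT_le_filtrationLE r hl)
  -- `(ρ + l) * (ρ' + l') = ρ * ρ' + ρ * l' + l * (ρ' + l')`, where `ρ = x - l` has degree `≤ r`
  have hlow : π (r + s) ((ρ + l) * (ρ' + l')) - ρ * ρ' ∈ filtrationLT X (r + s) := by
    have h1 := filtrationLE_mul_filtrationLT_le hmul r s (mul_mem_mul hρ_le hl')
    have h2 := filtrationLT_mul_filtrationLE_le hmul r s (mul_mem_mul hl (le_filtrationLE s hy))
    have h3 := sub_proj_mem_filtrationLT hπ_id hπ_ne (hmul r s (mul_mem_mul hx hy))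
    convert add_mem (add_mem h1 h2) (neg_mem h3) using 1
    noncomm_ring
  have hρρ' : ρ * ρ' ∈ Subalgebra.toSubmodule R := R.mul_mem hρ hρ'
  simpa using add_mem (mem_sup_left hρρ') (mem_sup_right hlow)

theorem span_leadingForms_eq_top {B : Type*} [Ring B] [Algebra k B]
    (hmul : ∀ r s, X r * X s ≤ filtrationLE X (r + s)) (hone : (1 : A) ∈ X 0)
    {π : S → A →ₗ[k] A} (hπ_mem : ∀ t a, π t a ∈ X t) (hπ_id : ∀ t, ∀ x ∈ X t, π t x = x)
    (hπ_ne : ∀ s t, s ≠ t → ∀ x ∈ X s, π t x = 0) (e : A ≃ₗ[k] B) (he_one : e 1 = 1)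
    (he_mul : ∀ r s, ∀ x ∈ X r, ∀ y ∈ X s, e x * e y = e (π (r + s) (x * y)))
    {G : Set A} (hG : ∀ g ∈ G, ∃ s, g ∈ X s) (hGB : Algebra.adjoin k (e '' G) = ⊤) :
    span k (leadingForms X (Algebra.adjoin k G)) = ⊤ := by
  set L := leadingForms X (Algebra.adjoin k G)
  have hone_R : (1 : A) ∈ Subalgebra.toSubmodule (Algebra.adjoin k G) :=
    (Algebra.adjoin k G).one_mem
  let M : Submonoid B :=
    { carrier := e '' L
      one_mem' := ⟨1, ⟨0, hone, mem_sup_left hone_R⟩, he_one⟩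
      mul_mem' := by
        rintro _ _ ⟨x, ⟨r, hx, hxR⟩, rfl⟩ ⟨y, ⟨s, hy, hyR⟩, rfl⟩
        exact ⟨_, proj_mul_mem_leadingForms hmul hπ_mem hπ_id hπ_ne hx hxR hy hyR,
          (he_mul r s x hx y hy).symm⟩ }
  have hGL : e '' G ⊆ M := Set.image_mono fun g hg =>
    let ⟨s, hs⟩ := hG g hg
    ⟨s, hs, mem_sup_left (Algebra.subset_adjoin hg : g ∈ Algebra.adjoin k G)⟩
  have hML : span k (e '' L) = ⊤ := by
    refine eq_top_iff.2 ?_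
    calc ⊤ = Subalgebra.toSubmodule (Algebra.adjoin k (e '' G)) := by rw [hGB]; rfl
      _ ≤ Subalgebra.toSubmodule (Algebra.adjoin k (M : Set B)) := Algebra.adjoin_mono hGL
      _ = span k (e '' L) := by rw [Algebra.adjoin_eq_span, Submonoid.closure_eq]; rfl
  have hL := congrArg (map (e.symm : B →ₗ[k] A)) hML
  rw [map_span, Submodule.map_top, LinearEquiv.range] at hL
  simpa [Set.image_image] using hL

end FilteredAlgebra

open FilteredAlgebra

theorem gr_finiteType_implies_finiteType_general
    {k : Type*} [Field k]
    {S : Type*} [AddCommMonoid S] [PartialOrder S] [DecidableEq S]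
    (hstrict : ∀ r s t : S, r < s → r + t < s + t)
    (hwf : WellFounded ((· < ·) : S → S → Prop))
    {A : Type*} [Ring A] [Algebra k A]
    (X : S → Submodule k A)
    (hinternal : DirectSum.IsInternal X)
    (hone : (1 : A) ∈ X 0)
    (hmulX : ∀ r s : S, ∀ a ∈ X r, ∀ b ∈ X s,
      a * b ∈ ⨆ (t : S) (_ : t ≤ r + s), X t)
    (π : S → (A →ₗ[k] A))
    (hπ_mem : ∀ (t : S) (a : A), π t a ∈ X t)
    (hπ_id : ∀ t : S, ∀ x ∈ X t, π t x = x)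
    (hπ_ne : ∀ s t : S, s ≠ t → ∀ x ∈ X s, π t x = 0)
    {B : Type*} [Ring B] [Algebra k B]
    (e : A ≃ₗ[k] B)
    (he_one : e 1 = 1)
    (he_mul : ∀ r s : S, ∀ x ∈ X r, ∀ y ∈ X s,
      e x * e y = e (π (r + s) (x * y)))
    (hB : Algebra.FiniteType k B) :
    Algebra.FiniteType k A := by
  have : AddLeftStrictMono S := ⟨fun t r s h => by simpa only [add_comm t] using hstrict r s t h⟩
  have : WellFoundedLT S := ⟨hwf⟩
  have hmul : ∀ r s, X r * X s ≤ filtrationLE X (r + s) := fun r s => mul_le.2 (hmulX r s)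
  have hX := hinternal.submodule_iSup_eq_top
  obtain ⟨G, hG, hGB⟩ := exists_finset_homogeneous_adjoin_eq_top hX e
  have hL := span_leadingForms_eq_top hmul hone hπ_mem hπ_id hπ_ne e he_one he_mul hG hGB
  have hXR : ∀ s, X s ≤ Subalgebra.toSubmodule (Algebra.adjoin k (G : Set A)) :=
    le_of_le_sup_filtrationLT (le_of_span_homogeneous_eq_top hπ_id hπ_ne hL fun _ hx => hx)
  exact ⟨G, eq_top_iff.2 fun a _ => iSup_le hXR (hX ▸ mem_top : a ∈ ⨆ s, X s)⟩

/-- Let `k` be a field, `(S,+,0)` an ordered commutative monoid whose order is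
compatible with addition (both for `≤` and `<`), directed, and well-founded.  Let `A` be a
`k`-algebra with an internal direct sum decomposition `A = ⊕_{s ∈ S} X s` such that `1 ∈ X 0` and
`X r · X s ⊆ ⊕_{t ≤ r+s} X t`, with projections `π t` onto the components.  Let `B` be the
associated graded algebra: a `k`-algebra together with a `k`-linear equivalence `e : A ≃ B`
satisfying `e 1 = 1` and `e x * e y = e (π (r+s) (x*y))` for `x ∈ X r`, `y ∈ X s`.
If `B` is finitely generated as a `k`-algebra, then so is `A`. -/
theorem gr_finiteType_implies_finiteType
    {k : Type*} [Field k]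
    {S : Type*} [AddCommMonoid S] [PartialOrder S] [DecidableEq S]
    (hmono : ∀ r r' s s' : S, r ≤ r' → s ≤ s' → r + s ≤ r' + s')
    (hstrict : ∀ r s t : S, r < s → r + t < s + t)
    (hdir : ∀ r s : S, ∃ m : S, r ≤ m ∧ s ≤ m)
    (hwf : WellFounded ((· < ·) : S → S → Prop))
    {A : Type*} [Ring A] [Algebra k A]
    (X : S → Submodule k A)
    (hinternal : DirectSum.IsInternal X)
    (hone : (1 : A) ∈ X 0)
    (hmulX : ∀ r s : S, ∀ a ∈ X r, ∀ b ∈ X s,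
      a * b ∈ ⨆ (t : S) (_ : t ≤ r + s), X t)
    (π : S → (A →ₗ[k] A))
    (hπ_mem : ∀ (t : S) (a : A), π t a ∈ X t)
    (hπ_id : ∀ t : S, ∀ x ∈ X t, π t x = x)
    (hπ_ne : ∀ s t : S, s ≠ t → ∀ x ∈ X s, π t x = 0)
    {B : Type*} [Ring B] [Algebra k B]
    (e : A ≃ₗ[k] B)
    (he_one : e 1 = 1)
    (he_mul : ∀ r s : S, ∀ x ∈ X r, ∀ y ∈ X s,
      e x * e y = e (π (r + s) (x * y)))
    (hB : Algebra.FiniteType k B) :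
    Algebra.FiniteType k A :=
  gr_finiteType_implies_finiteType_general hstrict hwf X hinternal hone hmulX π hπ_mem hπ_id hπ_ne e
    he_one he_mul hB
end

section
/- Hilbert–Nagata theorem for module-algebras: Let A = ⊕_{i∈I} A_i be an I-graded k-algebra which is a left H-module-algebra, and assume that: A_0 = k·1_A; A is Noetherian and finitely generated as a k-algebra; and each homogeneous component A_i is stable under the H-action and is semisimple as an H-module. Then the subalgebra of invariants A^H is Noetherian and finitely generated as a k-algebra. -/
/-!
Every graded piece is a semisimple `H`-module, hence so is `A`. The invariants form a fully
invariant `H`-submodule, i.e. a sum of isotypic components, so the remaining isotypic components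
span a fully invariant complement, and the projection `P` onto `A^H` along it (the Reynolds
operator) commutes with every `H`-linear endomorphism of `A`. By the module-algebra law, right
multiplication by an invariant is such an endomorphism, so `P (a * x) = P a * x` for `x ∈ A^H`;
thus `P (A • J) = J` for every left ideal `J` of `A^H`, and `A^H` inherits the ascending chain
condition from `A`.

The graded projections commute with the action, so `A^H` is a graded subalgebra. As `A^H` is
Noetherian, the left ideal spanned by the homogeneous invariants of positive degree is generated
by finitely many of them, `f₁, …, fₙ`. A homogeneous invariant `x` of positive degree is
`∑ cᵢ * fᵢ` with `cᵢ ∈ A^H`, and only components of the `cᵢ` of degree smaller than that of `x`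
contribute; by well-founded induction on the degree, `A^H = k[f₁, …, fₙ]`.
-/

open TensorProduct

/-- The action of `H` on `A` by scalar multiplication, packaged as a `k`-bilinear map. -/
noncomputable def actMap (k H A : Type*) [CommSemiring k] [Semiring H] [Algebra k H]
    [AddCommMonoid A] [Module k A] [Module H A] [IsScalarTower k H A] [SMulCommClass k H A] :
    H →ₗ[k] A →ₗ[k] A :=
  LinearMap.mk₂ k (fun h a => h • a) (fun h h' a => add_smul h h' a)
    (fun c h a => smul_assoc c h a) (fun h a a' => smul_add h a a')
    (fun c h a => (smul_comm c h a).symm)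

/-- A `k`-submodule `V` of `A` is stable under the `H`-action. -/
def IsHStable (H : Type*) {k A : Type*} [Semiring k] [AddCommMonoid A] [Module k A] [SMul H A]
    (V : Submodule k A) : Prop :=
  ∀ (h : H), ∀ a ∈ V, h • a ∈ V

/-- A `k`-submodule `V` of `A` is a simple `H`-submodule: it is `H`-stable, nonzero, and its only
`H`-stable `k`-submodules are `⊥` and `V`. -/
def IsSimpleHSub (H : Type*) {k A : Type*} [Semiring k] [AddCommMonoid A] [Module k A] [SMul H A]
    (V : Submodule k A) : Prop :=
  IsHStable H V ∧ V ≠ ⊥ ∧ ∀ U : Submodule k A, U ≤ V → IsHStable H U → U = ⊥ ∨ U = V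

/-- A `k`-submodule `W` of `A` is semisimple as an `H`-module: it is the sum of the simple
`H`-submodules contained in it. -/
def IsSemisimpleHSub (H : Type*) {k A : Type*} [Semiring k] [AddCommMonoid A] [Module k A]
    [SMul H A] (W : Submodule k A) : Prop :=
  W = sSup {V : Submodule k A | IsSimpleHSub H V ∧ V ≤ W}

theorem Submodule.IsFullyInvariant.exists_isProj_commute {R M : Type*} [Ring R] [AddCommGroup M]
    [Module R M] [IsSemisimpleModule R M] {N : Submodule R M} (hN : N.IsFullyInvariant) :
    ∃ P : Module.End R M, LinearMap.IsProj N P ∧ ∀ f : Module.End R M, Commute P f := by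
  obtain ⟨C, hC, hNC⟩ := CompleteSublattice.isComplemented_iff.mp
    OrderIso.setIsotypicComponents.complementedLattice N hN
  refine ⟨N.projection C hNC, ⟨projection_apply_mem hNC, fun _ ↦ projection_apply_of_mem_left hNC⟩,
    fun f ↦ (LinearMap.IsIdempotentElem.commute_iff (isIdempotentElem_projection hNC)).mpr ⟨?_, ?_⟩⟩
  · rw [range_projection]; exact hN f
  · rw [ker_projection]; exact hC f

theorem Subalgebra.isNoetherianRing_of_retraction {k A : Type*} [CommSemiring k] [Semiring A]
    [Algebra k A] [IsNoetherianRing A] (S : Subalgebra k A) (P : A →+ A) (hP_mem : ∀ a, P a ∈ S)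
    (hP_id : ∀ s ∈ S, P s = s) (hP_mul : ∀ a, ∀ s ∈ S, P (a * s) = P a * s) :
    IsNoetherianRing S := by
  have comap_map_le (J : Ideal S) : (J.map S.val).comap S.val ≤ J := by
    have key : ∀ y ∈ J.map S.val, ∀ a, P (a * y) ∈ Subtype.val '' (J : Set S) := by
      intro y hy
      induction hy using Submodule.span_induction with
      | mem _ hj =>
        obtain ⟨j, hj, rfl⟩ := hj
        intro a
        exact ⟨⟨P a, hP_mem a⟩ * j, J.mul_mem_left _ hj, (hP_mul a j j.2).symm⟩
      | zero => intro a; exact ⟨0, J.zero_mem, by simp⟩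
      | add y z _ _ hy hz =>
        intro a
        obtain ⟨j, hj, hjy⟩ := hy a
        obtain ⟨j', hj', hjz⟩ := hz a
        exact ⟨j + j', J.add_mem hj hj', by simp [mul_add, hjy, hjz]⟩
      | smul b y _ hy => intro a; simpa [mul_assoc] using hy (a * b)
    intro x hx
    obtain ⟨j, hj, hjx⟩ := key _ hx 1
    rw [one_mul, Subalgebra.coe_val, hP_id _ x.2, Subtype.val_inj] at hjx
    exact hjx ▸ hj
  have : WellFoundedGT (Ideal A) := isNoetherian_iff'.mp ‹_›
  exact isNoetherian_iff'.mpr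
    ((Ideal.gc_map_comap S.val).toGaloisCoinsertion comap_map_le).strictMono_l.wellFoundedGT

namespace DirectSum

variable {ι A σ : Type*} [DecidableEq ι]

theorem decompose_map_of_mapsTo [AddCommMonoid A] [SetLike σ A] [AddSubmonoidClass σ A]
    (𝒜 : ι → σ) [Decomposition 𝒜] (f : A →+ A) (hf : ∀ i, ∀ x ∈ 𝒜 i, f x ∈ 𝒜 i) (a : A)
    (i : ι) : (decompose 𝒜 (f a) i : A) = f (decompose 𝒜 a i) := by
  induction a using Decomposition.inductionOn 𝒜 with
  | zero => simp
  | add a b ha hb => simp [ha, hb]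
  | @homogeneous j a =>
    by_cases hij : j = i
    · subst hij
      rw [decompose_of_mem_same 𝒜 (hf j a a.2), decompose_of_mem_same 𝒜 a.2]
    · rw [decompose_of_mem_ne 𝒜 (hf j a a.2) hij, decompose_of_mem_ne 𝒜 a.2 hij, map_zero]

theorem coe_decompose_mul_mem_of_right_mem [Semiring A] [AddMonoid ι] [SetLike σ A]
    [AddSubmonoidClass σ A] (𝒜 : ι → σ) [GradedRing 𝒜] {T : Type*} [SetLike T A]
    [AddSubmonoidClass T A] {B : T} {a b : A} {d i : ι} (hb : b ∈ 𝒜 d)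
    (h : ∀ j, j + d = i → (decompose 𝒜 a j : A) * b ∈ B) :
    (decompose 𝒜 (a * b) i : A) ∈ B := by
  classical
  have hab : a * b = ∑ j ∈ (decompose 𝒜 a).support, (decompose 𝒜 a j : A) * b := by
    rw [← Finset.sum_mul, sum_support_decompose]
  rw [hab, decompose_sum, DFinsupp.finsetSum_apply, AddSubmonoidClass.coe_finsetSum]
  refine sum_mem fun j _ ↦ ?_
  have hjb : (decompose 𝒜 a j : A) * b ∈ 𝒜 (j + d) :=
    SetLike.GradedMul.mul_mem (decompose 𝒜 a j).2 hb
  by_cases hji : j + d = i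
  · rw [decompose_of_mem_same 𝒜 (hji ▸ hjb)]
    exact h j hji
  · rw [decompose_of_mem_ne 𝒜 hjb hji]
    exact zero_mem B

end DirectSum

open DirectSum in
theorem Subalgebra.fg_of_isNoetherianRing_of_decompose_mem {k A ι : Type*} [CommSemiring k]
    [Semiring A] [Algebra k A] [DecidableEq ι] [AddMonoid ι] [Preorder ι] [WellFoundedLT ι]
    (hlt : ∀ j d : ι, d ≠ 0 → j < j + d) (𝒜 : ι → Submodule k A) [GradedAlgebra 𝒜]
    (h0 : 𝒜 0 ≤ Subalgebra.toSubmodule ⊥) (S : Subalgebra k A) [IsNoetherianRing S]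
    (hS : ∀ x ∈ S, ∀ i, (decompose 𝒜 x i : A) ∈ S) : S.FG := by
  classical
  obtain ⟨F, hF, hspan⟩ := (Submodule.fg_span_iff_fg_span_finset_subset
    {s : S | ∃ d ≠ 0, (s : A) ∈ 𝒜 d}).mp (IsNoetherian.noetherian (R := S) _)
  set B := Algebra.adjoin k ((F.image Subtype.val : Finset A) : Set A)
  have hFB : ∀ f ∈ F, (f : A) ∈ B := fun f hf ↦
    Algebra.subset_adjoin (Finset.mem_coe.mpr (Finset.mem_image_of_mem _ hf))
  have homogeneous_mem : ∀ i, ∀ x ∈ 𝒜 i, x ∈ S → x ∈ B := by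
    intro i
    induction i using WellFoundedLT.induction with
    | _ i ih =>
    intro x hxi hxS
    by_cases hi : i = 0
    · subst hi
      obtain ⟨c, rfl⟩ := Algebra.mem_bot.mp (h0 hxi)
      exact B.algebraMap_mem c
    have hx : (⟨x, hxS⟩ : S) ∈ Submodule.span S (F : Set S) :=
      hspan ▸ Submodule.subset_span ⟨i, hi, hxi⟩
    obtain ⟨c, -, hc⟩ := Submodule.mem_span_finset.mp hx
    have hx' : x = ∑ f ∈ F, (c f : A) * f := by
      simpa using congrArg Subtype.val hc.symm
    rw [← decompose_of_mem_same 𝒜 hxi, hx', decompose_sum, DFinsupp.finsetSum_apply,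
      AddSubmonoidClass.coe_finsetSum]
    refine sum_mem fun f hf ↦ ?_
    obtain ⟨d, hd, hfd⟩ := hF hf
    refine coe_decompose_mul_mem_of_right_mem 𝒜 hfd fun j hj ↦ mul_mem ?_ (hFB f hf)
    exact ih j (hj ▸ hlt j d hd) _ (decompose 𝒜 _ j).2 (hS _ (c f).2 j)
  refine ⟨F.image Subtype.val, le_antisymm (Algebra.adjoin_le ?_) fun x hx ↦ ?_⟩
  · rw [Finset.coe_image]
    exact Set.image_subset_iff.mpr fun f _ ↦ f.2
  · rw [← sum_support_decompose 𝒜 x]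
    exact sum_mem fun i _ ↦ homogeneous_mem i _ (decompose 𝒜 x i).2 (hS x hx i)

section HStable

variable {k H A : Type*} [Semiring k] [Semiring H] [AddCommMonoid A] [Module k A] [Module H A]

def IsHStable.toSubmodule {V : Submodule k A} (hV : IsHStable H V) : Submodule H A :=
  { V with smul_mem' := fun h _ ha ↦ hV h _ ha }

theorem IsSimpleHSub.isAtom_toSubmodule [SMul k H] [IsScalarTower k H A] {V : Submodule k A}
    (hV : IsSimpleHSub H V) : IsAtom hV.1.toSubmodule := by
  refine ⟨fun hbot ↦ hV.2.1 (Submodule.ext fun a ↦ SetLike.ext_iff.mp hbot a), fun U hU ↦ ?_⟩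
  have hUV : U.restrictScalars k ≤ V := fun a ha ↦ hU.le ha
  refine (Submodule.restrictScalars_eq_bot_iff k H A).mp
    ((hV.2.2 _ hUV fun h _ ha ↦ U.smul_mem h ha).resolve_right fun hUeq ↦ hU.ne ?_)
  exact SetLike.ext fun a ↦ SetLike.ext_iff.mp hUeq a

end HStable

theorem isSemisimpleModule_of_iSup_eq_top {k H A ι : Type*} [Semiring k] [Ring H]
    [AddCommGroup A] [Module k A] [Module H A] [SMul k H] [IsScalarTower k H A]
    {W : ι → Submodule k A} (htop : ⨆ i, W i = ⊤) (hW : ∀ i, IsSemisimpleHSub H (W i)) :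
    IsSemisimpleModule H A := by
  refine IsSemisimpleModule.of_sSup_simples_eq_top (eq_top_iff.mpr fun a _ ↦ ?_)
  have hle : ⨆ i, W i ≤ (sSup {m : Submodule H A | IsSimpleModule H m}).restrictScalars k :=
    iSup_le fun i ↦ (hW i).le.trans <| sSup_le fun V hV ↦
      le_sSup (s := {m : Submodule H A | IsSimpleModule H m})
        (isSimpleModule_iff_isAtom.mpr hV.1.isAtom_toSubmodule)
  exact hle (htop ▸ Submodule.mem_top)

section Invariants

variable {k H A : Type*} [CommSemiring k] [Semiring H] [Module k H] [CoalgebraStruct k H]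
  [AddCommMonoid A] [Module k A] [Module H A] [SMulCommClass k H A]

variable (k H A) in
def invariants : Submodule H A where
  carrier := {a | ∀ h : H, h • a = Coalgebra.counit (R := k) h • a}
  add_mem' ha hb h := by rw [smul_add, ha h, hb h, smul_add]
  zero_mem' h := by rw [smul_zero, smul_zero]
  smul_mem' h' a ha h := by
    rw [ha h', ← smul_comm (Coalgebra.counit h') h a, ha h, smul_comm (Coalgebra.counit h')]

theorem mem_invariants {a : A} :
    a ∈ invariants k H A ↔ ∀ h : H, h • a = Coalgebra.counit (R := k) h • a := Iff.rfl

variable (k H A) in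
theorem invariants_isFullyInvariant [IsScalarTower k H A] :
    (invariants k H A).IsFullyInvariant := fun f a ha h ↦ by
  rw [← LinearMap.map_smul, ha h, LinearMap.map_smul_of_tower]

open DirectSum in
theorem decompose_mem_invariants {ι : Type*} [DecidableEq ι] (𝒜 : ι → Submodule k A)
    [Decomposition 𝒜] (hstable : ∀ i, IsHStable H (𝒜 i)) {x : A} (hx : x ∈ invariants k H A)
    (i : ι) : (decompose 𝒜 x i : A) ∈ invariants k H A := fun h ↦
  calc h • (decompose 𝒜 x i : A)
      = decompose 𝒜 (h • x) i :=
        (decompose_map_of_mapsTo 𝒜 (DistribSMul.toAddMonoidHom A h) (hstable · h) x i).symm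
    _ = decompose 𝒜 (Coalgebra.counit (R := k) h • x) i := by rw [hx h]
    _ = Coalgebra.counit (R := k) h • (decompose 𝒜 x i : A) :=
        decompose_map_of_mapsTo 𝒜 (DistribSMul.toAddMonoidHom A _)
          (fun j _ hy ↦ (𝒜 j).smul_mem _ hy) x i

end Invariants

section ModuleAlgebra

variable {k H A : Type*} [CommSemiring k] [Semiring H] [Algebra k H] [Coalgebra k H]
  [Semiring A] [Algebra k A] [Module H A] [IsScalarTower k H A] [SMulCommClass k H A]

theorem smul_mul_of_mem_invariants
    (hmul : ∀ (h : H) (a b : A), h • (a * b) =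
      TensorProduct.lift ((LinearMap.mul k A).compl₁₂
        ((actMap k H A).flip a) ((actMap k H A).flip b)) (Coalgebra.comul (R := k) h))
    {x : A} (hx : x ∈ invariants k H A) (h : H) (a : A) : h • (a * x) = (h • a) * x := by
  have hlift : TensorProduct.lift ((LinearMap.mul k A).compl₁₂
        ((actMap k H A).flip a) ((actMap k H A).flip x))
      = LinearMap.mulRight k x ∘ₗ (actMap k H A).flip a ∘ₗ (TensorProduct.rid k H).toLinearMap
          ∘ₗ LinearMap.lTensor H (Coalgebra.counit (R := k)) :=
    TensorProduct.ext' fun h₁ h₂ ↦ by simp [actMap, hx h₂]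
  rw [hmul, hlift]
  simp [Coalgebra.lTensor_counit_comul, actMap]

theorem apply_mul_of_mem_invariants
    (hmul : ∀ (h : H) (a b : A), h • (a * b) =
      TensorProduct.lift ((LinearMap.mul k A).compl₁₂
        ((actMap k H A).flip a) ((actMap k H A).flip b)) (Coalgebra.comul (R := k) h))
    {P : Module.End H A} (hP : ∀ f : Module.End H A, Commute P f) {x : A}
    (hx : x ∈ invariants k H A) (a : A) : P (a * x) = P a * x :=
  LinearMap.congr_fun (hP
    { toFun := (· * x)
      map_add' := (add_mul · · x)
      map_smul' := fun h a ↦ (smul_mul_of_mem_invariants hmul hx h a).symm }) a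

end ModuleAlgebra

theorem hilbert_nagata_module_algebra_general
    {k H : Type*} [Field k] [Ring H] [HopfAlgebra k H]
    {I : Type*} [AddCommMonoid I] [PartialOrder I] [DecidableEq I]
    (hle0 : ∀ i : I, 0 ≤ i)
    (hcov : ∀ i j l : I, i ≤ j → i + l ≤ j + l)
    (hcancel : ∀ i j : I, i + j = i → j = 0)
    (hwf : WellFounded ((· < ·) : I → I → Prop))
    {A : Type*} [Ring A] [Algebra k A] [Module H A]
    [IsScalarTower k H A] [SMulCommClass k H A]
    (hma_mul : ∀ (h : H) (a b : A), h • (a * b) =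
      TensorProduct.lift ((LinearMap.mul k A).compl₁₂
        ((actMap k H A).flip a) ((actMap k H A).flip b)) (Coalgebra.comul (R := k) h))
    (𝒜 : I → Submodule k A)
    (hinternal : DirectSum.IsInternal 𝒜)
    (hzero : 𝒜 0 = Submodule.span k {(1 : A)})
    (hgmul : ∀ i j : I, ∀ a ∈ 𝒜 i, ∀ b ∈ 𝒜 j, a * b ∈ 𝒜 (i + j))
    (hNoeth : IsNoetherianRing A)
    (hstable : ∀ i : I, IsHStable H (𝒜 i))
    (hss : ∀ i : I, IsSemisimpleHSub H (𝒜 i))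
    (AH : Subalgebra k A)
    (hAH : ∀ a : A, a ∈ AH ↔ ∀ h : H, h • a = Coalgebra.counit (R := k) h • a) :
    IsNoetherianRing AH ∧ Algebra.FiniteType k AH := by
  have hAH' (a : A) : a ∈ AH ↔ a ∈ invariants k H A := (hAH a).trans mem_invariants.symm
  have : IsSemisimpleModule H A :=
    isSemisimpleModule_of_iSup_eq_top hinternal.submodule_iSup_eq_top hss
  obtain ⟨P, hP, hPcomm⟩ := (invariants_isFullyInvariant k H A).exists_isProj_commute
  have hNoethAH : IsNoetherianRing AH := AH.isNoetherianRing_of_retraction P.toAddMonoidHom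
    (fun a ↦ (hAH' _).mpr (hP.map_mem a)) (fun s hs ↦ hP.map_id s ((hAH' s).mp hs))
    (fun a s hs ↦ apply_mul_of_mem_invariants hma_mul hPcomm ((hAH' s).mp hs) a)
  let : GradedAlgebra 𝒜 :=
    { hinternal.chooseDecomposition with
      one_mem := hzero ▸ Submodule.mem_span_singleton_self 1
      mul_mem := fun _ _ _ _ ha hb ↦ hgmul _ _ _ ha _ hb }
  have : WellFoundedLT I := ⟨hwf⟩
  have hlt (j d : I) (hd : d ≠ 0) : j < j + d := by
    refine lt_of_le_of_ne ?_ fun h ↦ hd (hcancel j d h.symm)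
    simpa [add_comm] using hcov 0 d j (hle0 d)
  refine ⟨hNoethAH, (Subalgebra.fg_iff_finiteType AH).mp <|
    AH.fg_of_isNoetherianRing_of_decompose_mem hlt 𝒜 ?_ fun x hx i ↦
      (hAH' _).mpr (decompose_mem_invariants 𝒜 hstable ((hAH' x).mp hx) i)⟩
  rw [hzero, Algebra.toSubmodule_bot, Submodule.one_eq_span]

/-- **Hilbert–Nagata theorem for module-algebras.**
Let `H` be a Hopf algebra over a field `k` and `A = ⊕_{i ∈ I} 𝒜 i` an `I`-graded `k`-algebra
(the order on `I` satisfying `0 ≤ i`, translation invariance, cancellation `i+j = i → j = 0`,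
and well-foundedness) which is a left `H`-module-algebra
(`h • (a*b) = Σ (h₁ • a)(h₂ • b)`, `h • 1 = ε(h) • 1`).  Assume `𝒜 0 = k·1`, that `A` is
Noetherian and finitely generated, and that each `𝒜 i` is `H`-stable and semisimple as an
`H`-module.  Then the subalgebra of invariants `A^H` is Noetherian and finitely generated. -/
theorem hilbert_nagata_module_algebra
    {k H : Type*} [Field k] [Ring H] [HopfAlgebra k H]
    {I : Type*} [AddCommMonoid I] [PartialOrder I] [DecidableEq I]
    (hle0 : ∀ i : I, 0 ≤ i)
    (hcov : ∀ i j l : I, i ≤ j → i + l ≤ j + l)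
    (hcancel : ∀ i j : I, i + j = i → j = 0)
    (hwf : WellFounded ((· < ·) : I → I → Prop))
    {A : Type*} [Ring A] [Algebra k A] [Module H A]
    [IsScalarTower k H A] [SMulCommClass k H A]
    (hma_mul : ∀ (h : H) (a b : A), h • (a * b) =
      TensorProduct.lift ((LinearMap.mul k A).compl₁₂
        ((actMap k H A).flip a) ((actMap k H A).flip b)) (Coalgebra.comul (R := k) h))
    (hma_one : ∀ h : H, h • (1 : A) = Coalgebra.counit (R := k) h • (1 : A))
    (𝒜 : I → Submodule k A)
    (hinternal : DirectSum.IsInternal 𝒜)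
    (hzero : 𝒜 0 = Submodule.span k {(1 : A)})
    (hgmul : ∀ i j : I, ∀ a ∈ 𝒜 i, ∀ b ∈ 𝒜 j, a * b ∈ 𝒜 (i + j))
    (hNoeth : IsNoetherianRing A)
    (hft : Algebra.FiniteType k A)
    (hstable : ∀ i : I, IsHStable H (𝒜 i))
    (hss : ∀ i : I, IsSemisimpleHSub H (𝒜 i))
    (AH : Subalgebra k A)
    (hAH : ∀ a : A, a ∈ AH ↔ ∀ h : H, h • a = Coalgebra.counit (R := k) h • a) :
    IsNoetherianRing AH ∧ Algebra.FiniteType k AH :=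
  hilbert_nagata_module_algebra_general hle0 hcov hcancel hwf hma_mul 𝒜 hinternal hzero hgmul hNoeth
    hstable hss AH hAH
end

section
/- Let A = ⊕_{i∈I} A_i be an I-graded k-algebra such that A_0 = k·1_A. If A is Noetherian, then A is finitely generated as a k-algebra. -/
/-!
Let `S` be the set of homogeneous elements of nonzero degree. Since `A` is Noetherian, the ideal
generated by `S` is generated by a finite subset `T ⊆ S`. Every homogeneous `a` of degree `i ≠ 0`
is then `∑ cₜ t`, and comparing components of degree `i` gives `a = ∑ (cₜ)ⱼ t` over the degrees
`j` with `j + deg t = i`; these `j` are strictly below `i`, so well-founded induction on the degree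
shows that `A` is generated by `A₀` and `T`.
-/

open DirectSum

namespace GradedAlgebra

variable {ι R A : Type*} [DecidableEq ι] [AddMonoid ι] [CommSemiring R] [Semiring A]
  [Algebra R A] (𝒜 : ι → Submodule R A) [GradedAlgebra 𝒜]

theorem proj_mul_mem_of_mem_grade {B : Subalgebra R A} {t : A} {d i : ι} (ht : t ∈ 𝒜 d)
    (htB : t ∈ B) (hB : ∀ j, j + d = i → ∀ a ∈ 𝒜 j, a ∈ B) (c : A) :
    GradedRing.proj 𝒜 i (c * t) ∈ B := by
  induction c using DirectSum.Decomposition.inductionOn 𝒜 with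
  | zero => simp
  | @homogeneous j c =>
    have hct : (c : A) * t ∈ 𝒜 (j + d) := SetLike.GradedMul.mul_mem c.2 ht
    rw [GradedRing.proj_apply]
    by_cases h : j + d = i
    · rw [decompose_of_mem_same 𝒜 (h ▸ hct)]
      exact B.mul_mem (hB j h c c.2) htB
    · rw [decompose_of_mem_ne 𝒜 hct h]
      exact B.zero_mem
  | add x y hx hy =>
    rw [add_mul, map_add]
    exact B.add_mem hx hy

variable [Preorder ι]

theorem proj_mem_of_mem_span_of_lt (hlt : ∀ j d : ι, d ≠ 0 → j < j + d) {B : Subalgebra R A}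
    {T : Set A} (hTB : T ⊆ B) (hT : T ⊆ ⋃ d ≠ 0, (𝒜 d : Set A)) {i : ι}
    (hB : ∀ j < i, ∀ a ∈ 𝒜 j, a ∈ B) {x : A} (hx : x ∈ Ideal.span T) :
    GradedRing.proj 𝒜 i x ∈ B := by
  suffices ∀ c, GradedRing.proj 𝒜 i (c * x) ∈ B by simpa using this 1
  induction hx using Submodule.span_induction with
  | mem t ht =>
    obtain ⟨d, hd, htd⟩ := Set.mem_iUnion₂.mp (hT ht)
    exact proj_mul_mem_of_mem_grade 𝒜 htd (hTB ht) fun j hj => hB j (hj ▸ hlt j d hd)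
  | zero => simp
  | add x y _ _ hx hy =>
    intro c
    rw [mul_add, map_add]
    exact B.add_mem (hx c) (hy c)
  | smul a x _ hx =>
    intro c
    rw [smul_eq_mul, ← mul_assoc]
    exact hx (c * a)

theorem adjoin_grade_zero_union_eq_top [WellFoundedLT ι] (hlt : ∀ j d : ι, d ≠ 0 → j < j + d)
    {T : Set A} (hT : T ⊆ ⋃ d ≠ 0, (𝒜 d : Set A))
    (hspan : Ideal.span T = Ideal.span (⋃ d ≠ 0, (𝒜 d : Set A))) :
    Algebra.adjoin R ((𝒜 0 : Set A) ∪ T) = ⊤ := by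
  set B := Algebra.adjoin R ((𝒜 0 : Set A) ∪ T)
  have hgrade : ∀ i, ∀ a ∈ 𝒜 i, a ∈ B := by
    intro i
    induction i using WellFoundedLT.induction with
    | _ i IH =>
    intro a ha
    by_cases hi : i = 0
    · subst hi
      exact Algebra.subset_adjoin (Or.inl ha)
    have haT : a ∈ Ideal.span T := hspan ▸ Ideal.subset_span (Set.mem_iUnion₂.mpr ⟨i, hi, ha⟩)
    rw [← decompose_of_mem_same 𝒜 ha]
    exact proj_mem_of_mem_span_of_lt 𝒜 hlt (fun t ht => Algebra.subset_adjoin (Or.inr ht)) hT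
      IH haT
  suffices ∀ a, a ∈ B from eq_top_iff.mpr fun a _ => this a
  intro a
  induction a using DirectSum.Decomposition.inductionOn 𝒜 with
  | zero => exact B.zero_mem
  | homogeneous a => exact hgrade _ _ a.2
  | add x y hx hy => exact B.add_mem hx hy

theorem finiteType_of_isNoetherianRing [WellFoundedLT ι] (hlt : ∀ j d : ι, d ≠ 0 → j < j + d)
    [IsNoetherianRing A] (h0 : (𝒜 0).FG) : Algebra.FiniteType R A := by
  classical
  obtain ⟨T, hTS, hspan⟩ := (Submodule.fg_span_iff_fg_span_finset_subset _).mp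
    (IsNoetherian.noetherian (Ideal.span (⋃ d ≠ 0, (𝒜 d : Set A))))
  obtain ⟨S₀, hS₀⟩ := h0
  refine ⟨⟨S₀ ∪ T, eq_top_iff.mpr ?_⟩⟩
  rw [← adjoin_grade_zero_union_eq_top 𝒜 hlt hTS hspan.symm, Algebra.adjoin_le_iff,
    Finset.coe_union]
  refine Set.union_subset ?_ (Algebra.subset_adjoin.trans' Set.subset_union_right)
  rw [← hS₀]
  exact fun x hx => Algebra.adjoin_mono Set.subset_union_left (Algebra.span_le_adjoin R _ hx)

end GradedAlgebra

/-- Let `k` be a field and `I` a commutative additive monoid with a partial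
order `≤` such that `0 ≤ i` for all `i`, `i ≤ j → i + l ≤ j + l`, `i + j = i → j = 0`, and `≤`
is well-founded.  Let `A = ⊕_{i ∈ I} 𝒜 i` be an `I`-graded `k`-algebra with `𝒜 0 = k·1`.
If `A` is Noetherian, then `A` is finitely generated as a `k`-algebra. -/
theorem graded_noetherian_implies_finiteType
    {k : Type*} [Field k]
    {I : Type*} [AddCommMonoid I] [PartialOrder I] [DecidableEq I]
    (hle0 : ∀ i : I, 0 ≤ i)
    (hcov : ∀ i j l : I, i ≤ j → i + l ≤ j + l)
    (hcancel : ∀ i j : I, i + j = i → j = 0)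
    (hwf : WellFounded ((· < ·) : I → I → Prop))
    {A : Type*} [Ring A] [Algebra k A]
    (𝒜 : I → Submodule k A)
    (hinternal : DirectSum.IsInternal 𝒜)
    (hzero : 𝒜 0 = Submodule.span k {(1 : A)})
    (hgmul : ∀ i j : I, ∀ a ∈ 𝒜 i, ∀ b ∈ 𝒜 j, a * b ∈ 𝒜 (i + j))
    (hNoeth : IsNoetherianRing A) :
    Algebra.FiniteType k A := by
  let _ : GradedAlgebra 𝒜 :=
    { hinternal.chooseDecomposition with
      one_mem := hzero ▸ Submodule.mem_span_singleton_self 1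
      mul_mem := fun i j _ _ ha hb => hgmul i j _ ha _ hb }
  have : WellFoundedLT I := ⟨hwf⟩
  have hlt : ∀ j d : I, d ≠ 0 → j < j + d := fun j d hd =>
    lt_of_le_of_ne (by simpa [add_comm] using hcov 0 d j (hle0 d))
      fun h => hd (hcancel j d h.symm)
  exact GradedAlgebra.finiteType_of_isNoetherianRing 𝒜 hlt (hzero ▸ Submodule.fg_span_singleton 1)
end

section
/- Let A = ⊕_{i∈I} A_i be an I-graded k-algebra which is a left H-module-algebra, such that each homogeneous component A_i is stable under the H-action and is semisimple as an H-module, and let 𝔑 : A → A be the Reynolds operator (the unique k-linear H-equivariant map with 𝔑(A_i) ⊆ A_i for all i, 𝔑(a) = a for all a ∈ A^H, and 𝔑(A) ⊆ A^H). Then for every left ideal J of the subalgebra A^H one has 𝔑(A·J) = J, where A·J denotes the left ideal of A generated by J. Consequently, if x_1, …, x_n ∈ J satisfy A·J = A x_1 + ⋯ + A x_n, then J = A^H x_1 + ⋯ + A^H x_n. -/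
open TensorProduct

/-- Let `H` be a Hopf algebra over a field `k` and `A = ⊕_{i ∈ I} 𝒜 i` an
`I`-graded `k`-algebra which is a left `H`-module-algebra, with each `𝒜 i` stable under the
`H`-action and semisimple as an `H`-module, and let `𝔑 : A → A` be the Reynolds operator.
Then for every left ideal `J` of the subalgebra of invariants `A^H` one has `𝔑(A·J) = J`
(as subsets of `A`), and consequently if `x 0, …, x (n-1) ∈ J` are such that
`A·J = A (x 0) + ⋯ + A (x (n-1))`, then `J = A^H (x 0) + ⋯ + A^H (x (n-1))`. -/
theorem reynolds_contracts_ideals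
    {k H : Type*} [Field k] [Ring H] [HopfAlgebra k H]
    {I : Type*} [AddCommMonoid I] [PartialOrder I] [DecidableEq I]
    (hle0 : ∀ i : I, 0 ≤ i)
    (hcov : ∀ i j l : I, i ≤ j → i + l ≤ j + l)
    (hcancel : ∀ i j : I, i + j = i → j = 0)
    (hwf : WellFounded ((· < ·) : I → I → Prop))
    {A : Type*} [Ring A] [Algebra k A] [Module H A]
    [IsScalarTower k H A] [SMulCommClass k H A]
    (hma_mul : ∀ (h : H) (a b : A), h • (a * b) =
      TensorProduct.lift ((LinearMap.mul k A).compl₁₂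
        ((actMap k H A).flip a) ((actMap k H A).flip b)) (Coalgebra.comul (R := k) h))
    (hma_one : ∀ h : H, h • (1 : A) = Coalgebra.counit (R := k) h • (1 : A))
    (𝒜 : I → Submodule k A)
    (hinternal : DirectSum.IsInternal 𝒜)
    (hone : (1 : A) ∈ 𝒜 0)
    (hgmul : ∀ i j : I, ∀ a ∈ 𝒜 i, ∀ b ∈ 𝒜 j, a * b ∈ 𝒜 (i + j))
    (hstable : ∀ i : I, IsHStable H (𝒜 i))
    (hss : ∀ i : I, IsSemisimpleHSub H (𝒜 i))
    (𝔑 : A →ₗ[k] A)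
    (hR_equiv : ∀ (h : H) (a : A), 𝔑 (h • a) = h • 𝔑 a)
    (hR_graded : ∀ i : I, ∀ a ∈ 𝒜 i, 𝔑 a ∈ 𝒜 i)
    (hR_inv : ∀ a : A, (∀ h : H, h • a = Coalgebra.counit (R := k) h • a) → 𝔑 a = a)
    (hR_range : ∀ (a : A) (h : H), h • 𝔑 a = Coalgebra.counit (R := k) h • 𝔑 a)
    (AH : Subalgebra k A)
    (hAH : ∀ a : A, a ∈ AH ↔ ∀ h : H, h • a = Coalgebra.counit (R := k) h • a)
    (J : Ideal AH) :
    (𝔑 '' ((Ideal.span ((fun a : AH => (a : A)) '' (J : Set AH)) : Ideal A) : Set A)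
        = (fun a : AH => (a : A)) '' (J : Set AH)) ∧
    (∀ (n : ℕ) (x : Fin n → AH), (∀ i, x i ∈ J) →
      (Ideal.span ((fun a : AH => (a : A)) '' (J : Set AH)) : Ideal A)
          = Submodule.span A (Set.range fun i => ((x i : A))) →
      J = Submodule.span AH (Set.range x)) := by
    classical
  -- abbreviation for invariance
  set ε : H → k := fun h => Coalgebra.counit (R := k) h with hε
  -- Key: right multiplication by an invariant element is H-equivariant
  have key_act : ∀ x : A, (∀ h' : H, h' • x = ε h' • x) →
      ∀ (h : H) (a : A), h • (a * x) = (h • a) * x := by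
    intro x hx h a
    rw [hma_mul]
    set G : H ⊗[k] k →ₗ[k] A :=
      ((LinearMap.mulRight k x).comp ((actMap k H A).flip a)).comp
        (TensorProduct.rid k H).toLinearMap with hGdef
    have hlift : TensorProduct.lift ((LinearMap.mul k A).compl₁₂
        ((actMap k H A).flip a) ((actMap k H A).flip x)) =
        G ∘ₗ (LinearMap.lTensor H (Coalgebra.counit (R := k))) := by
      apply TensorProduct.ext'
      intro g g'
      have := hx g'
      simp only [hε] at this
      simp [hGdef, actMap, LinearMap.mul_apply', this, mul_smul_comm, smul_assoc,
        TensorProduct.lift.tmul]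
    rw [hlift, LinearMap.comp_apply]
    have hcc : LinearMap.lTensor H (Coalgebra.counit (R := k)) (Coalgebra.comul (R := k) h)
        = h ⊗ₜ[k] (1 : k) := Coalgebra.lTensor_counit_comul (R := k) h
    rw [hcc]
    simp [hGdef, actMap]
  -- product of invariants is invariant
  have inv_mul : ∀ a x : A, (∀ h : H, h • a = ε h • a) → (∀ h : H, h • x = ε h • x) →
      ∀ h : H, h • (a * x) = ε h • (a * x) := by
    intro a x ha hx h
    rw [key_act x hx h a, ha h, smul_mul_assoc]
  -- dichotomy for simple H-submodules
  have dich : ∀ V : Submodule k A, IsSimpleHSub H V → ∀ ψ : A →ₗ[k] A,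
      (∀ (h : H) (b : A), ψ (h • b) = h • ψ b) →
      (∀ (b : A) (h : H), h • ψ b = ε h • ψ b) →
      (∀ v ∈ V, ψ v = 0) ∨ (∀ h : H, ∀ v ∈ V, h • v = ε h • v) := by
    intro V hV ψ hψe hψi
    obtain ⟨hstab, -, hsimp⟩ := hV
    have hU : IsHStable H (V ⊓ LinearMap.ker ψ) := by
      intro h b hb
      refine ⟨hstab h b hb.1, ?_⟩
      have hb2 : ψ b = 0 := hb.2
      simp [LinearMap.mem_ker, hψe, hb2]
    rcases hsimp (V ⊓ LinearMap.ker ψ) inf_le_left hU with h0 | hV'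
    · right
      intro h v hv
      have hmem : h • v - ε h • v ∈ V ⊓ LinearMap.ker ψ := by
        refine ⟨sub_mem (hstab h v hv) (Submodule.smul_mem _ _ hv), ?_⟩
        simp [LinearMap.mem_ker, map_sub, hψe, map_smul, hψi v h]
      rw [h0] at hmem
      exact sub_eq_zero.mp (Submodule.mem_bot k |>.mp hmem)
    · left
      intro v hv
      exact (hV'.ge hv).2
  -- the Reynolds identity
  have hNmul : ∀ x : A, (∀ h : H, h • x = ε h • x) → ∀ a : A, 𝔑 (a * x) = 𝔑 a * x := by
    intro x hx
    set ψ₁ : A →ₗ[k] A := 𝔑 ∘ₗ LinearMap.mulRight k x with hψ₁def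
    have hψ₁e : ∀ (h : H) (b : A), ψ₁ (h • b) = h • ψ₁ b := by
      intro h b
      simp only [hψ₁def, LinearMap.comp_apply, LinearMap.mulRight_apply]
      rw [← key_act x hx h b, hR_equiv]
    have hψ₁i : ∀ (b : A) (h : H), h • ψ₁ b = ε h • ψ₁ b := fun b h => hR_range _ h
    have trivialcase : ∀ v : A, (∀ h : H, h • v = ε h • v) → 𝔑 (v * x) = 𝔑 v * x := by
      intro v hv
      rw [hR_inv v hv, hR_inv (v * x) (inv_mul v x hv hx)]
    suffices hsuff : (⊤ : Submodule k A) ≤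
        LinearMap.ker (ψ₁ - (LinearMap.mulRight k x) ∘ₗ 𝔑) by
      intro a
      have h1 := hsuff (Submodule.mem_top (x := a))
      have h2 : ψ₁ a - ((LinearMap.mulRight k x) ∘ₗ 𝔑) a = 0 := h1
      have := sub_eq_zero.mp h2
      simpa [hψ₁def] using this
    rw [← hinternal.submodule_iSup_eq_top]
    apply iSup_le
    intro i
    rw [hss i]
    apply sSup_le
    rintro V ⟨hVs, -⟩
    intro v hv
    have goal_eq : 𝔑 (v * x) = 𝔑 v * x := by
      rcases dich V hVs 𝔑 hR_equiv hR_range with h0 | htriv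
      · rcases dich V hVs ψ₁ hψ₁e hψ₁i with h1 | htriv
        · have e1 : 𝔑 (v * x) = 0 := h1 v hv
          rw [e1, h0 v hv, zero_mul]
        · exact trivialcase v (fun h => htriv h v hv)
      · exact trivialcase v (fun h => htriv h v hv)
    simp [LinearMap.mem_ker, LinearMap.sub_apply, hψ₁def, sub_eq_zero, goal_eq]
  -- the image set of J, as a k-submodule of A
  set M : Submodule k A := (J.restrictScalars k).map (Subalgebra.val AH).toLinearMap with hMdef
  have hMset : (M : Set A) = (fun a : AH => (a : A)) '' (J : Set AH) := by
    ext b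
    simp [hMdef, Submodule.mem_map]
  have hMinv : ∀ b ∈ M, ∀ h : H, h • b = ε h • b := by
    intro b hb h
    have hb' : b ∈ (M : Set A) := hb
    rw [hMset] at hb'
    obtain ⟨y, hy, rfl⟩ := hb'
    exact (hAH y).mp y.2 h
  -- N maps the big ideal into M
  have hNspan : ∀ a ∈ (Ideal.span ((fun a : AH => (a : A)) '' (J : Set AH)) : Ideal A), 𝔑 a ∈ M := by
    intro a ha
    have ha' : a ∈ Submodule.span A ((fun a : AH => (a : A)) '' (J : Set AH)) := ha
    rw [Submodule.mem_span_set] at ha'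
    obtain ⟨c, hcsupp, rfl⟩ := ha'
    rw [map_finsuppSum]
    apply Submodule.sum_mem
    intro mi hmi
    have hmiJ : mi ∈ (fun a : AH => (a : A)) '' (J : Set AH) := hcsupp hmi
    have hmiM : mi ∈ M := by rw [← hMset] at hmiJ; exact hmiJ
    have hmiinv : ∀ h : H, h • mi = ε h • mi := hMinv mi hmiM
    show 𝔑 (c mi • mi) ∈ M
    have heq : 𝔑 (c mi • mi) = 𝔑 (c mi) * mi := by
      rw [smul_eq_mul, hNmul mi hmiinv]
    rw [heq]
    rw [← hMset] at hmiJ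
    obtain ⟨y, hy, rfl⟩ := (by rwa [hMset] at hmiJ : mi ∈ (fun a : AH => (a : A)) '' (J : Set AH))
    show _ ∈ (M : Set A)
    rw [hMset]
    refine ⟨(⟨𝔑 (c (y : A)), (hAH _).mpr (fun h => hR_range _ h)⟩ : AH) • y,
      J.smul_mem _ hy, rfl⟩
  constructor
  · apply Set.Subset.antisymm
    · rintro b ⟨a, ha, rfl⟩
      have hh : 𝔑 a ∈ (M : Set A) := hNspan a ha
      rwa [hMset] at hh
    · rintro b hb
      have hbinv : ∀ h : H, h • b = ε h • b := by
        obtain ⟨y, hy, rfl⟩ := hb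
        exact (hAH y).mp y.2
      exact ⟨b, Ideal.subset_span hb, hR_inv b hbinv⟩
  · intro n x hxJ hspan
    apply le_antisymm
    · intro j hj
      have h1 : (j : A) ∈ Submodule.span A (Set.range fun i => ((x i : A))) := by
        rw [← hspan]
        exact Ideal.subset_span ⟨j, hj, rfl⟩
      rw [Submodule.mem_span_range_iff_exists_fun] at h1
      obtain ⟨c, hc⟩ := h1
      have h2 : (j : A) = ∑ i, 𝔑 (c i) * (x i : A) := by
        have h3 := congrArg 𝔑 hc
        rw [map_sum] at h3
        rw [← hR_inv (j : A) ((hAH _).mp j.2), ← h3]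
        apply Finset.sum_congr rfl
        intro i _
        rw [smul_eq_mul, hNmul (x i : A) ((hAH _).mp (x i).2)]
      rw [Submodule.mem_span_range_iff_exists_fun]
      refine ⟨fun i => ⟨𝔑 (c i), (hAH _).mpr (fun h => hR_range _ h)⟩, ?_⟩
      apply Subtype.ext
      rw [h2]
      push_cast
      rfl
    · rw [Submodule.span_le]
      rintro _ ⟨i, rfl⟩
      exact hxJ i
end

section
/- Let μ : H' → A be a quantum moment map and χ : H' → k a morphism of algebras. Then for every h' ∈ Ker χ and every a ∈ A, the element ( Σ_{(h')} χ(h'_{(1)}) h'_{(2)} ) ▸ a − μ(h') a lies in the left ideal I_χ = A·μ(Ker χ). (Here Δ(h') = Σ_{(h')} h'_{(1)} ⊗ h'_{(2)} with h'_{(1)} ∈ H', so χ(h'_{(1)}) makes sense.) -/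
open TensorProduct

/-- The right adjoint action `ad^r(h)(g) = Σ S(h₁) g h₂` of a Hopf algebra on itself. -/
noncomputable def adr (k : Type*) {H : Type*} [CommSemiring k] [Semiring H] [HopfAlgebra k H]
    (h g : H) : H :=
  TensorProduct.lift ((LinearMap.mul k H).compl₁₂
    ((LinearMap.mulRight k g).comp (HopfAlgebra.antipode (R := k))) LinearMap.id)
    (Coalgebra.comul (R := k) h)

/-- Let `μ : H' → A` be a quantum moment map and `χ : H' → k` a morphism of
algebras.  Then for every `h' ∈ Ker χ` and every `a ∈ A`, the element
`(Σ χ(h'₁) h'₂) • a − μ(h') a` lies in the left ideal `I_χ = A · μ(Ker χ)`. -/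
theorem qmm_character_ideal_membership
    {k H : Type*} [Field k] [Ring H] [HopfAlgebra k H]
    (hS : Function.Bijective (HopfAlgebra.antipode (R := k) (A := H)))
    {A : Type*} [Ring A] [Algebra k A] [Module H A] [IsScalarTower k H A] [SMulCommClass k H A]
    (hma_mul : ∀ (h : H) (a b : A), h • (a * b) =
      TensorProduct.lift (((LinearMap.mul k A).compl₁₂
        ((actMap k H A).flip a) ((actMap k H A).flip b)).flip) (Coalgebra.comul (R := k) h))
    (hma_one : ∀ h : H, h • (1 : A) = Coalgebra.counit (R := k) h • (1 : A))
    (H' : Subalgebra k H)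
    (comul' : H' →ₗ[k] (↥H') ⊗[k] H)
    (hcomul' : ∀ x : H', (TensorProduct.map H'.val.toLinearMap LinearMap.id) (comul' x)
      = Coalgebra.comul (R := k) (x : H))
    (hstab : ∀ (h : H), ∀ g ∈ H', adr k h g ∈ H')
    (μ : H' →ₐ[k] A)
    (hqmm : ∀ (x : H') (a : A),
      TensorProduct.lift (((LinearMap.mul k A).compl₁₂ ((actMap k H A).flip a)
        μ.toLinearMap).flip) (comul' x) = μ x * a)
    (χ : H' →ₐ[k] k) :
    ∀ x : H', χ x = 0 → ∀ a : A,
      (TensorProduct.lift ((LinearMap.lsmul k H).comp χ.toLinearMap) (comul' x)) • a - μ x * a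
        ∈ Ideal.span ((fun y : H' => μ y) '' {y : H' | χ y = 0}) := by
  intro x hx a
  have key : ∀ t : (↥H') ⊗[k] H,
      (TensorProduct.lift ((LinearMap.lsmul k H).comp χ.toLinearMap) t) • a
        - TensorProduct.lift (((LinearMap.mul k A).compl₁₂ ((actMap k H A).flip a)
            μ.toLinearMap).flip) t
        ∈ Ideal.span ((fun y : H' => μ y) '' {y : H' | χ y = 0}) := by
    intro t
    induction t using TensorProduct.induction_on with
    | zero =>
      rw [LinearMap.map_zero, LinearMap.map_zero, zero_smul, sub_zero]
      exact Ideal.zero_mem _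
    | tmul y h =>
      have hz : χ (χ y • (1 : H') - y) = 0 := by simp
      have hm : μ (χ y • (1 : H') - y)
          ∈ Ideal.span ((fun y : H' => μ y) '' {y : H' | χ y = 0}) :=
        Ideal.subset_span ⟨_, hz, rfl⟩
      have hmem := Ideal.mul_mem_left _ (h • a) hm
      convert hmem using 1
      simp only [TensorProduct.lift.tmul, LinearMap.coe_comp, Function.comp_apply,
        AlgHom.toLinearMap_apply, LinearMap.lsmul_apply, LinearMap.flip_apply,
        LinearMap.compl₁₂_apply, LinearMap.mul_apply', actMap, LinearMap.mk₂_apply,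
        map_sub, map_smul, map_one]
      rw [mul_sub, mul_smul_comm, mul_one, smul_assoc]
    | add t t' ht ht' =>
      rw [map_add, map_add, add_smul]
      have : (TensorProduct.lift ((LinearMap.lsmul k H).comp χ.toLinearMap) t) • a
          + (TensorProduct.lift ((LinearMap.lsmul k H).comp χ.toLinearMap) t') • a
          - (TensorProduct.lift (((LinearMap.mul k A).compl₁₂ ((actMap k H A).flip a)
              μ.toLinearMap).flip) t
            + TensorProduct.lift (((LinearMap.mul k A).compl₁₂ ((actMap k H A).flip a)
              μ.toLinearMap).flip) t')
          = ((TensorProduct.lift ((LinearMap.lsmul k H).comp χ.toLinearMap) t) • a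
              - TensorProduct.lift (((LinearMap.mul k A).compl₁₂ ((actMap k H A).flip a)
                μ.toLinearMap).flip) t)
            + ((TensorProduct.lift ((LinearMap.lsmul k H).comp χ.toLinearMap) t') • a
              - TensorProduct.lift (((LinearMap.mul k A).compl₁₂ ((actMap k H A).flip a)
                μ.toLinearMap).flip) t') := by abel
      rw [this]
      exact Ideal.add_mem _ ht ht'
  have h2 := hqmm x a
  have h3 := key (comul' x)
  rwa [h2] at h3
end
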